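/- arXiv:1204.6307 — 10 statements merged into one kernel-verified Lean document; each statement's English description precedes it below -/
import Mathlib

section
/- For N even and every nonzero λ ∈ ℂ, the charge Θ commutes with the transfer matrix and with the diagonal monodromy entries, and q-commutes with the off-diagonal ones: T(λ)Θ = Θ T(λ), A(λ)Θ = Θ A(λ), D(λ)Θ = Θ D(λ), Θ C(λ) = q C(λ) Θ, and B(λ)Θ = q Θ B(λ). -/
open Matrix Complex Filter Topology

namespace SG

/-- Index set for the basis of `(ℂ^p)^{⊗N}`. -/
abbrev Idx (p N : ℕ) := Fin N → ZMod p

/-- Operators on `(ℂ^p)^{⊗N}`, realized as matrices. -/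
abbrev Op (p N : ℕ) := Matrix (Idx p N) (Idx p N) ℂ

/-- The square root of `q`: `q^{1/2} := q^{(p+1)/2}`. -/
noncomputable def qh (p : ℕ) (q : ℂ) : ℂ := q ^ ((p + 1) / 2)

/-- The operator `𝗎_n = u_n · (shift at site n)`, `𝗎_n|k⟩ = u_n |k-1⟩`. -/
noncomputable def uop (p N : ℕ) (u : Fin N → ℂ) (n : Fin N) : Op p N :=
  Matrix.of fun f g => if f = Function.update g n (g n - 1) then u n else 0

/-- The inverse of `𝗎_n`. -/
noncomputable def uopInv (p N : ℕ) (u : Fin N → ℂ) (n : Fin N) : Op p N :=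
  Matrix.of fun f g => if f = Function.update g n (g n + 1) then (u n)⁻¹ else 0

/-- The operator `𝗏_n = v_n · (clock at site n)`, `𝗏_n|k⟩ = v_n q^k |k⟩`. -/
noncomputable def vop (p N : ℕ) (q : ℂ) (v : Fin N → ℂ) (n : Fin N) : Op p N :=
  Matrix.diagonal fun g => v n * q ^ (g n).val

/-- The inverse of `𝗏_n`. -/
noncomputable def vopInv (p N : ℕ) (q : ℂ) (v : Fin N → ℂ) (n : Fin N) : Op p N :=
  Matrix.diagonal fun g => (v n * q ^ (g n).val)⁻¹

/-- The Lax matrix `L_n(λ)`. -/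
noncomputable def Lax (p N : ℕ) [NeZero p] (q : ℂ) (κ ξ u v : Fin N → ℂ) (n : Fin N)
    (lam : ℂ) : Matrix (Fin 2) (Fin 2) (Op p N) :=
  !![κ n • (uop p N u n *
        ((qh p q)⁻¹ • (κ n • vop p N q v n) + qh p q • ((κ n)⁻¹ • vopInv p N q v n))),
     (κ n / Complex.I) • ((lam / ξ n) • vop p N q v n - (lam / ξ n)⁻¹ • vopInv p N q v n);
     (κ n / Complex.I) • ((lam / ξ n) • vopInv p N q v n - (lam / ξ n)⁻¹ • vop p N q v n),
     κ n • (uopInv p N u n *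
        (qh p q • ((κ n)⁻¹ • vop p N q v n) + (qh p q)⁻¹ • (κ n • vopInv p N q v n)))]

/-- The monodromy matrix `M(λ) = L_N(λ) ⋯ L_1(λ)`. -/
noncomputable def Mon (p N : ℕ) [NeZero p] (q : ℂ) (κ ξ u v : Fin N → ℂ) (lam : ℂ) :
    Matrix (Fin 2) (Fin 2) (Op p N) :=
  (((List.finRange N).map fun n => Lax p N q κ ξ u v n lam).reverse).prod

/-- `A(λ)`, the (1,1) entry of the monodromy matrix. -/
noncomputable def Amat (p N : ℕ) [NeZero p] (q : ℂ) (κ ξ u v : Fin N → ℂ) (lam : ℂ) :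
    Op p N := Mon p N q κ ξ u v lam 0 0

/-- `B(λ)`, the (1,2) entry of the monodromy matrix. -/
noncomputable def Bmat (p N : ℕ) [NeZero p] (q : ℂ) (κ ξ u v : Fin N → ℂ) (lam : ℂ) :
    Op p N := Mon p N q κ ξ u v lam 0 1

/-- `C(λ)`, the (2,1) entry of the monodromy matrix. -/
noncomputable def Cmat (p N : ℕ) [NeZero p] (q : ℂ) (κ ξ u v : Fin N → ℂ) (lam : ℂ) :
    Op p N := Mon p N q κ ξ u v lam 1 0

/-- `D(λ)`, the (2,2) entry of the monodromy matrix. -/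
noncomputable def Dmat (p N : ℕ) [NeZero p] (q : ℂ) (κ ξ u v : Fin N → ℂ) (lam : ℂ) :
    Op p N := Mon p N q κ ξ u v lam 1 1

/-- The transfer matrix `T(λ) = A(λ) + D(λ)`. -/
noncomputable def Tmat (p N : ℕ) [NeZero p] (q : ℂ) (κ ξ u v : Fin N → ℂ) (lam : ℂ) :
    Op p N := Amat p N q κ ξ u v lam + Dmat p N q κ ξ u v lam

/-- The grading charge `Θ = ∏_{n=1}^N 𝗏_n^{(-1)^n}` (sites `n : Fin N` correspond to
the 1-indexed site `n+1`, whence the exponent `(-1)^{n+1}`); it is a diagonal operator. -/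
noncomputable def Theta (p N : ℕ) (q : ℂ) (v : Fin N → ℂ) : Op p N :=
  Matrix.diagonal fun g => ∏ n : Fin N, (v n * q ^ (g n).val) ^ ((-1 : ℤ) ^ ((n : ℕ) + 1))

/-- The inverse `Θ^{-1}` of the grading charge. -/
noncomputable def ThetaInv (p N : ℕ) (q : ℂ) (v : Fin N → ℂ) : Op p N :=
  Matrix.diagonal fun g => ∏ n : Fin N, (v n * q ^ (g n).val) ^ ((-1 : ℤ) ^ (n : ℕ))

/-- The average `𝒪(λ) = ∏_{k=1}^p O(q^k λ)` of a commuting family `O`. -/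
noncomputable def avg (p N : ℕ) [NeZero p] (q : ℂ) (O : ℂ → Op p N) (lam : ℂ) : Op p N :=
  ((List.range p).map fun k => O (q ^ (k + 1) * lam)).prod

end SG

/-!
`Θ` is diagonal, so it commutes with the clock operators `𝗏_n`, while conjugating by it
multiplies the shift `𝗎_n^{±1}` by `q^{∓ε_n}`, `ε_n = (-1)^{n+1}` being the exponent of the site `n`
in `Θ`. Hence the `(i, j)` entry of `L_n(λ)` is `q`-commuted by `Θ` with weight `ε_n (i + j - 1)`.
For two consecutive sites these weights add up, along every summand of the matrix product, to the
weight `i - j` of a coboundary; matrices graded by a coboundary form a submonoid, and for `N` even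
the monodromy matrix is a product of such two-site blocks `L_{2k+1} L_{2k}`.
-/

theorem List.prod_reverse_mem_of_pairs {M : Type*} [Monoid M] {S : Submonoid M} :
    ∀ {l : List M}, Even l.length →
      (∀ k (hk : 2 * k + 1 < l.length), l[2 * k + 1] * l[2 * k] ∈ S) → l.reverse.prod ∈ S
  | [], _, _ => S.one_mem
  | [_], hl, _ => absurd hl (by simp)
  | a :: b :: l, hl, h => by
    have hpairs : ∀ k (hk : 2 * k + 1 < l.length), l[2 * k + 1] * l[2 * k] ∈ S := fun k hk =>
      h (k + 1) (by simp; omega)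
    simpa [mul_assoc] using
      S.mul_mem (prod_reverse_mem_of_pairs (by simpa [Nat.even_add_one] using hl) hpairs)
        (h 0 (by simp))

theorem SemiconjBy.sum_right {R ι : Type*} [NonUnitalNonAssocSemiring R] {s : Finset ι} {x : R}
    {f g : ι → R} (h : ∀ i ∈ s, SemiconjBy x (f i) (g i)) :
    SemiconjBy x (∑ i ∈ s, f i) (∑ i ∈ s, g i) := by
  rw [SemiconjBy, Finset.mul_sum, Finset.sum_mul]
  exact Finset.sum_congr rfl h

section IsQGraded

variable {K A n : Type*} [Field K] [Semiring A] [Algebra K A] [Fintype n]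

def IsQGraded (Θ : A) (q : K) (e : n → n → ℤ) (M : Matrix n n A) : Prop :=
  ∀ i j, SemiconjBy Θ (M i j) (q ^ e i j • M i j)

theorem IsQGraded.mul {Θ : A} {q : K} (hq : q ≠ 0) {e e' e'' : n → n → ℤ} {M M' : Matrix n n A}
    (hM : IsQGraded Θ q e M) (hM' : IsQGraded Θ q e' M')
    (he : ∀ i k j, e i k + e' k j = e'' i j) : IsQGraded Θ q e'' (M * M') := by
  intro i j
  rw [mul_apply, Finset.smul_sum]
  refine SemiconjBy.sum_right fun k _ => ?_
  rw [← he i k j, zpow_add₀ hq, ← smul_mul_smul_comm]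
  exact (hM i k).mul_right (hM' k j)

def gradedSubmonoid [DecidableEq n] (Θ : A) (q : Kˣ) (a : n → ℤ) : Submonoid (Matrix n n A) where
  carrier := {M | IsQGraded Θ (q : K) (fun i j => a i - a j) M}
  one_mem' i j := by
    rcases eq_or_ne i j with rfl | hij
    · simp [SemiconjBy]
    · simp [one_apply_ne hij, SemiconjBy]
  mul_mem' hM hM' := hM.mul q.ne_zero hM' fun i k j => by ring

end IsQGraded

theorem Matrix.semiconjBy_diagonal {n R : Type*} [Fintype n] [DecidableEq n] [CommSemiring R]
    {d : n → R} {X : Matrix n n R} {c : R} (h : ∀ f g, X f g ≠ 0 → d f = c * d g) :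
    SemiconjBy (diagonal d) X (c • X) := by
  ext f g
  rw [diagonal_mul, smul_mul_assoc, Matrix.smul_apply, mul_diagonal, smul_eq_mul]
  by_cases hX : X f g = 0
  · simp [hX]
  · rw [h f g hX]; ring

theorem pow_zmod_val_add_one {M : Type*} [Monoid M] {p : ℕ} [NeZero p] {q : M} (hq : q ^ p = 1)
    (k : ZMod p) : q ^ (k + 1).val = q ^ k.val * q := by
  rw [← pow_succ]
  refine pow_eq_pow_of_modEq ?_ hq
  rw [← ZMod.natCast_eq_natCast_iff]
  simp

namespace SG

section Chain

variable {p N : ℕ} [NeZero p] {q : ℂ} (v : Fin N → ℂ)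

theorem theta_entry_update_add_one (hq : q ^ p = 1) (g : Idx p N) (n : Fin N) :
    ∏ m, (v m * q ^ (Function.update g n (g n + 1) m).val) ^ ((-1 : ℤ) ^ ((m : ℕ) + 1)) =
      q ^ ((-1 : ℤ) ^ ((n : ℕ) + 1)) *
        ∏ m, (v m * q ^ (g m).val) ^ ((-1 : ℤ) ^ ((m : ℕ) + 1)) := by
  rw [← Finset.mul_prod_erase (M := ℂ) _ _ (Finset.mem_univ n),
    ← Finset.mul_prod_erase (M := ℂ) _ _ (Finset.mem_univ n), Function.update_self,
    pow_zmod_val_add_one hq, ← mul_assoc, mul_zpow, mul_comm _ (q ^ (-1 : ℤ) ^ ((n : ℕ) + 1)),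
    mul_assoc]
  congr 2
  exact Finset.prod_congr rfl fun m hm => by rw [Function.update_of_ne (Finset.ne_of_mem_erase hm)]

theorem semiconjBy_theta_uopInv (hq : q ^ p = 1) (u : Fin N → ℂ) (n : Fin N) :
    SemiconjBy (Theta p N q v) (uopInv p N u n)
      (q ^ (-1 : ℤ) ^ ((n : ℕ) + 1) • uopInv p N u n) :=
  semiconjBy_diagonal fun f g h => by
    obtain rfl : f = Function.update g n (g n + 1) := by
      by_contra hf
      simp [uopInv, hf] at h
    exact theta_entry_update_add_one v hq g n

theorem semiconjBy_theta_uop (hq : q ^ p = 1) (u : Fin N → ℂ) (n : Fin N) :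
    SemiconjBy (Theta p N q v) (uop p N u n)
      (q ^ (-(-1 : ℤ) ^ ((n : ℕ) + 1)) • uop p N u n) :=
  semiconjBy_diagonal fun f g h => by
    obtain rfl : f = Function.update g n (g n - 1) := by
      by_contra hf
      simp [uop, hf] at h
    have hq0 : q ≠ 0 := (IsUnit.of_pow_eq_one hq (NeZero.ne p)).ne_zero
    have hshift := theta_entry_update_add_one v hq (Function.update g n (g n - 1)) n
    rw [Function.update_idem, Function.update_self, sub_add_cancel, Function.update_eq_self]
      at hshift
    rw [hshift, _root_.zpow_neg, inv_mul_cancel_left₀ (zpow_ne_zero _ hq0)]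

theorem commute_theta_vop (n : Fin N) : Commute (Theta p N q v) (vop p N q v n) :=
  commute_diagonal _ _

theorem commute_theta_vopInv (n : Fin N) : Commute (Theta p N q v) (vopInv p N q v n) :=
  commute_diagonal _ _

theorem isQGraded_lax (hq : q ^ p = 1) (κ ξ u : Fin N → ℂ) (n : Fin N) (lam : ℂ) :
    IsQGraded (Theta p N q v) q
      !![-(-1 : ℤ) ^ ((n : ℕ) + 1), 0; 0, (-1 : ℤ) ^ ((n : ℕ) + 1)]
      (Lax p N q κ ξ u v n lam) := by
  have hv := commute_theta_vop (p := p) (q := q) v n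
  have hw := commute_theta_vopInv (p := p) (q := q) v n
  simp only [IsQGraded, Fin.forall_fin_two, Lax, of_apply, cons_val_zero, cons_val_one,
    zpow_zero, one_smul]
  refine ⟨⟨?_, ?_⟩, ?_, ?_⟩
  · simpa only [smul_mul_assoc, smul_comm (κ n)] using
      ((semiconjBy_theta_uop v hq u n).mul_right
        (((hv.smul_right _).smul_right _).add_right ((hw.smul_right _).smul_right _))).smul_right
          (κ n)
  · exact (((hv.smul_right _).sub_right (hw.smul_right _))).smul_right _
  · exact (((hw.smul_right _).sub_right (hv.smul_right _))).smul_right _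
  · simpa only [smul_mul_assoc, smul_comm (κ n)] using
      ((semiconjBy_theta_uopInv v hq u n).mul_right
        (((hv.smul_right _).smul_right _).add_right ((hw.smul_right _).smul_right _))).smul_right
          (κ n)

theorem isQGraded_lax_mul_lax (hq : q ^ p = 1) (κ ξ u : Fin N → ℂ) (lam : ℂ) (k : ℕ)
    (hk : 2 * k + 1 < N) :
    IsQGraded (Theta p N q v) q (fun i j => ![0, 1] i - ![0, 1] j)
      (Lax p N q κ ξ u v ⟨2 * k + 1, hk⟩ lam * Lax p N q κ ξ u v ⟨2 * k, by omega⟩ lam) := by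
  refine (isQGraded_lax v hq κ ξ u _ lam).mul (IsUnit.of_pow_eq_one hq (NeZero.ne p)).ne_zero
    (isQGraded_lax v hq κ ξ u _ lam) ?_
  have hodd : (-1 : ℤ) ^ (2 * k + 1 + 1) = 1 := by simp [pow_succ]
  have heven : (-1 : ℤ) ^ (2 * k + 1) = -1 := by simp [pow_succ]
  simp only [hodd, heven]
  decide

theorem isQGraded_mon (hq : q ^ p = 1) (hN : Even N) (κ ξ u : Fin N → ℂ) (lam : ℂ) :
    IsQGraded (Theta p N q v) q (fun i j => ![0, 1] i - ![0, 1] j) (Mon p N q κ ξ u v lam) :=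
  List.prod_reverse_mem_of_pairs (S := gradedSubmonoid (Theta p N q v)
      (Units.mk0 q (IsUnit.of_pow_eq_one hq (NeZero.ne p)).ne_zero) ![0, 1])
    (by simpa using hN) fun k hk => by
      simp only [List.getElem_map, List.getElem_finRange]
      exact isQGraded_lax_mul_lax v hq κ ξ u lam k (by simpa using hk)

end Chain

theorem statement0_general (p N : ℕ) [NeZero p]
    (q : ℂ) (hq : IsPrimitiveRoot q p)
    (κ ξ u v : Fin N → ℂ) (hNeven : Even N) (lam : ℂ) :
    Tmat p N q κ ξ u v lam * Theta p N q v = Theta p N q v * Tmat p N q κ ξ u v lam ∧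
    Amat p N q κ ξ u v lam * Theta p N q v = Theta p N q v * Amat p N q κ ξ u v lam ∧
    Dmat p N q κ ξ u v lam * Theta p N q v = Theta p N q v * Dmat p N q κ ξ u v lam ∧
    Theta p N q v * Cmat p N q κ ξ u v lam = q • (Cmat p N q κ ξ u v lam * Theta p N q v) ∧
    Bmat p N q κ ξ u v lam * Theta p N q v = q • (Theta p N q v * Bmat p N q κ ξ u v lam) := by
  have hM := isQGraded_mon v hq.pow_eq_one hNeven κ ξ u lam
  have hA : Commute (Theta p N q v) (Amat p N q κ ξ u v lam) := by
    simpa [Amat, Commute] using hM 0 0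
  have hD : Commute (Theta p N q v) (Dmat p N q κ ξ u v lam) := by
    simpa [Dmat, Commute] using hM 1 1
  have hB : SemiconjBy (Theta p N q v) (Bmat p N q κ ξ u v lam)
      (q⁻¹ • Bmat p N q κ ξ u v lam) := by simpa [Bmat] using hM 0 1
  have hC : SemiconjBy (Theta p N q v) (Cmat p N q κ ξ u v lam)
      (q • Cmat p N q κ ξ u v lam) := by simpa [Cmat] using hM 1 0
  refine ⟨(hA.add_right hD).eq.symm, hA.eq.symm, hD.eq.symm, by rw [hC.eq, smul_mul_assoc], ?_⟩
  rw [hB.eq, smul_mul_assoc, smul_smul, mul_inv_cancel₀ (hq.ne_zero (NeZero.ne p)), one_smul]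

/-- For `N` even and every nonzero `λ ∈ ℂ`, the charge `Θ` commutes with the
transfer matrix and with the diagonal monodromy entries, and `q`-commutes with the off-diagonal
ones. -/
theorem statement0 (p N : ℕ) [NeZero p] (hp : Odd p) (hp1 : 1 < p)
    (q : ℂ) (hq : IsPrimitiveRoot q p)
    (κ ξ u v : Fin N → ℂ) (hκ : ∀ n, κ n ≠ 0) (hξ : ∀ n, ξ n ≠ 0)
    (hu : ∀ n, ‖u n‖ = 1) (hv : ∀ n, ‖v n‖ = 1)
    (hN : 0 < N) (hNeven : Even N) (lam : ℂ) (hlam : lam ≠ 0) :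
    Tmat p N q κ ξ u v lam * Theta p N q v = Theta p N q v * Tmat p N q κ ξ u v lam ∧
    Amat p N q κ ξ u v lam * Theta p N q v = Theta p N q v * Amat p N q κ ξ u v lam ∧
    Dmat p N q κ ξ u v lam * Theta p N q v = Theta p N q v * Dmat p N q κ ξ u v lam ∧
    Theta p N q v * Cmat p N q κ ξ u v lam = q • (Cmat p N q κ ξ u v lam * Theta p N q v) ∧
    Bmat p N q κ ξ u v lam * Theta p N q v = q • (Theta p N q v * Bmat p N q κ ξ u v lam) :=
  statement0_general p N q hq κ ξ u v hNeven lam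

end SG
end

section
/- For N even, the operators A(λ) and D(λ) have the following asymptotics: lim_{λ→0} λ^{N} A(λ) = (∏_{a=1}^{N} κ_aξ_a/i)·Θ^{−1}, lim_{λ→∞} λ^{−N} A(λ) = (∏_{a=1}^{N} κ_aξ_a^{−1}/i)·Θ, lim_{λ→0} λ^{N} D(λ) = (∏_{a=1}^{N} κ_aξ_a/i)·Θ, and lim_{λ→∞} λ^{−N} D(λ) = (∏_{a=1}^{N} κ_aξ_a^{−1}/i)·Θ^{−1} (limits taken entrywise, λ ranging over ℂ∖{0}). -/
/-!
Writing `λ L_n(λ) = Z_n + λ B_n + λ² X_n`, the factor `λ L_n(λ)` tends to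
`Z_n = -(κ_n ξ_n / i) [[0, 𝗏_n⁻¹], [𝗏_n, 0]]` as `λ → 0`, and `λ⁻¹ L_n(λ)` tends to
`X_n = (κ_n / (ξ_n i)) [[0, 𝗏_n], [𝗏_n⁻¹, 0]]` as `λ → ∞`. Limits commute with the product
defining `M(λ)`, and a product of an even number of antidiagonal matrices whose entries commute is
diagonal, with alternating products as entries. Since the `𝗏_n` are diagonal, these products are
computed in the commutative ring of diagonals, where they are `Θ^{±1}`.
-/

open Matrix Complex Filter Topology

section QuadraticLimits

variable {𝕜 E : Type*} [NormedField 𝕜] [AddCommGroup E] [Module 𝕜 E] [TopologicalSpace E]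
  [IsTopologicalAddGroup E] [ContinuousSMul 𝕜 E] {F : 𝕜 → E} {a b c : E}

theorem tendsto_smul_nhdsNE_zero_of_quadratic (hF : ∀ t ≠ 0, t • F t = a + t • b + t ^ 2 • c) :
    Tendsto (fun t => t • F t) (𝓝[≠] 0) (𝓝 a) := by
  have hpoly : Tendsto (fun t : 𝕜 => a + t • b + t ^ 2 • c) (𝓝 0) (𝓝 a) := by
    simpa using ((by fun_prop : Continuous fun t : 𝕜 => a + t • b + t ^ 2 • c).tendsto 0)
  exact (hpoly.mono_left nhdsWithin_le_nhds).congr'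
    (eventually_mem_nhdsWithin.mono fun t ht => (hF t ht).symm)

theorem tendsto_inv_smul_cobounded_of_quadratic (hF : ∀ t ≠ 0, t • F t = a + t • b + t ^ 2 • c) :
    Tendsto (fun t => t⁻¹ • F t) (Bornology.cobounded 𝕜) (𝓝 c) := by
  have hpoly : Tendsto (fun s : 𝕜 => s ^ 2 • a + s • b + c) (𝓝 0) (𝓝 c) := by
    simpa using ((by fun_prop : Continuous fun s : 𝕜 => s ^ 2 • a + s • b + c).tendsto 0)
  refine (hpoly.comp tendsto_inv₀_cobounded).congr' ?_
  filter_upwards [Bornology.eventually_ne_cobounded 0] with t ht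
  have : t⁻¹ • F t = (t⁻¹) ^ 2 • (t • F t) := by
    rw [smul_smul]; congr 1; field_simp
  rw [Function.comp_apply, this, hF t ht]
  match_scalars <;> field_simp

end QuadraticLimits

theorem List.prod_map_smul_eq_smul_prod {ι M A : Type*} [CommMonoid M] [Monoid A] [MulAction M A]
    [IsScalarTower M A A] [SMulCommClass M A A] (l : List ι) (c : ι → M) (f : ι → A) :
    (l.map fun i => c i • f i).prod = (l.map c).prod • (l.map f).prod := by
  induction l with
  | nil => simp
  | cons i l ih => simp only [List.map_cons, List.prod_cons, ih, smul_mul_smul_comm]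

theorem Matrix.list_prod_reverse_antidiag_of_even {R : Type*} [CommSemiring R] :
    ∀ {n : ℕ}, Even n → ∀ a b : Fin n → R,
      ((List.finRange n).map fun k => !![0, a k; b k, 0]).reverse.prod =
        !![∏ k : Fin n, if Even (k : ℕ) then b k else a k, 0;
          0, ∏ k : Fin n, if Even (k : ℕ) then a k else b k]
  | 0, _, _, _ => by simp [Matrix.one_fin_two]
  | 1, h, _, _ => absurd h (by decide)
  | n + 2, h, a, b => by
    have hn : Even n := by simpa [Nat.even_add] using h
    have ih := list_prod_reverse_antidiag_of_even hn
      (fun k => a k.castSucc.castSucc) (fun k => b k.castSucc.castSucc)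
    rw [List.finRange_succ_last, List.finRange_succ_last]
    simp only [List.map_append, List.map_map, List.map_cons, List.map_nil, List.reverse_append,
      List.reverse_cons, List.reverse_nil, List.nil_append, List.prod_cons,
      List.singleton_append, Function.comp_def, ih, Fin.prod_univ_castSucc, mul_fin_two,
      mul_zero, zero_mul, add_zero, zero_add, Fin.val_castSucc, Fin.val_last, hn,
      Nat.even_add_one, not_true_eq_false, if_true, if_false]
    ring_nf

theorem Matrix.list_prod_reverse_smul_antidiag_of_even {S R : Type*} [CommSemiring S]
    [CommSemiring R] [Algebra S R] {n : ℕ} (hn : Even n) (c : Fin n → S) (a b : Fin n → R) :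
    ((List.finRange n).map fun k => c k • !![0, a k; b k, 0]).reverse.prod =
      (∏ k, c k) • !![∏ k : Fin n, if Even (k : ℕ) then b k else a k, 0;
        0, ∏ k : Fin n, if Even (k : ℕ) then a k else b k] := by
  rw [← List.map_reverse, List.prod_map_smul_eq_smul_prod, List.map_reverse, List.map_reverse,
    List.prod_reverse, ← List.ofFn_eq_map, List.prod_ofFn,
    Matrix.list_prod_reverse_antidiag_of_even hn]

theorem zpow_neg_one_pow_eq_ite {G : Type*} [DivInvMonoid G] (x : G) (n : ℕ) :
    x ^ ((-1 : ℤ) ^ n) = if Even n then x else x⁻¹ := by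
  rcases Nat.even_or_odd n with h | h
  · rw [h.neg_one_pow, zpow_one, if_pos h]
  · rw [h.neg_one_pow, _root_.zpow_neg_one, if_neg (Nat.not_even_iff_odd.mpr h)]

namespace SG

variable {p N : ℕ} (q : ℂ) (κ ξ u v : Fin N → ℂ)

noncomputable def clock (n : Fin N) : Idx p N → ℂ := fun g => v n * q ^ (g n).val

theorem Theta_eq : Theta p N q v =
    diagonal (∏ n : Fin N, if Even (n : ℕ) then (clock q v n)⁻¹ else clock q v n) := by
  refine congrArg diagonal (funext fun g => ?_)
  simp only [Finset.prod_apply, zpow_neg_one_pow_eq_ite, Nat.even_add_one]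
  refine Finset.prod_congr rfl fun n _ => ?_
  split_ifs <;> rfl

theorem ThetaInv_eq : ThetaInv p N q v =
    diagonal (∏ n : Fin N, if Even (n : ℕ) then clock q v n else (clock q v n)⁻¹) := by
  refine congrArg diagonal (funext fun g => ?_)
  simp only [Finset.prod_apply, zpow_neg_one_pow_eq_ite]
  refine Finset.prod_congr rfl fun n _ => ?_
  split_ifs <;> rfl

noncomputable def laxZero (n : Fin N) : Matrix (Fin 2) (Fin 2) (Idx p N → ℂ) :=
  -(κ n * ξ n / I) • !![0, (clock q v n)⁻¹; clock q v n, 0]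

noncomputable def laxInfty (n : Fin N) : Matrix (Fin 2) (Fin 2) (Idx p N → ℂ) :=
  (κ n * (ξ n)⁻¹ / I) • !![0, clock q v n; (clock q v n)⁻¹, 0]

variable (p) [NeZero p]

theorem smul_Lax_eq_quadratic {n : Fin N} (hξ : ξ n ≠ 0) : ∃ B, ∀ lam ≠ 0,
    lam • Lax p N q κ ξ u v n lam = (laxZero q κ ξ v n).map diagonal + lam • B +
      lam ^ 2 • (laxInfty q κ ξ v n).map diagonal := by
  have hvop : vop p N q v n = diagonal (clock q v n) := rfl
  have hvopInv : vopInv p N q v n = diagonal (clock q v n)⁻¹ := rfl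
  -- the diagonal entries of `Lax` do not depend on `lam`
  refine ⟨diagonal fun i => Lax p N q κ ξ u v n 1 i i, fun lam hlam => ?_⟩
  refine Matrix.ext fun i j => ?_
  fin_cases i <;> fin_cases j <;>
    simp only [Lax, laxZero, laxInfty, hvop, hvopInv, Matrix.map_apply, Matrix.smul_apply,
      Matrix.add_apply, diagonal_smul, of_apply, cons_val', cons_val_zero, cons_val_one,
      empty_val', cons_val_fin_one, Fin.zero_eta, Fin.mk_one, diagonal_apply_ne, ne_eq,
      zero_ne_one, one_ne_zero, not_false_eq_true, smul_zero, add_zero]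
  · simp
  · rw [inv_div]
    match_scalars <;> field_simp
  · rw [inv_div]
    match_scalars <;> field_simp
  · simp

theorem pow_smul_Mon (s lam : ℂ) :
    s ^ N • Mon p N q κ ξ u v lam =
      ((List.finRange N).map fun n => s • Lax p N q κ ξ u v n lam).reverse.prod := by
  rw [Mon, ← List.map_reverse, ← List.map_reverse, List.prod_map_smul_eq_smul_prod,
    List.map_const', List.prod_replicate, List.length_reverse, List.length_finRange]

theorem tendsto_pow_smul_Mon_of_tendsto_smul_Lax {l : Filter ℂ} (hN : Even N) (s : ℂ → ℂ)
    (c : Fin N → ℂ) (a b : Fin N → Idx p N → ℂ)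
    (hsite : ∀ n, Tendsto (fun lam => s lam • Lax p N q κ ξ u v n lam) l
      (𝓝 ((c n • !![0, a n; b n, 0]).map diagonal))) :
    Tendsto (fun lam => s lam ^ N • Mon p N q κ ξ u v lam) l
      (𝓝 ((∏ n, c n) • !![diagonal (∏ n : Fin N, if Even (n : ℕ) then b n else a n), 0;
        0, diagonal (∏ n : Fin N, if Even (n : ℕ) then a n else b n)])) := by
  have hprod := tendsto_list_prod (List.finRange N).reverse fun n _ => hsite n
  simp only [List.map_reverse] at hprod
  convert hprod using 2
  · exact pow_smul_Mon p q κ ξ u v _ _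
  · have hmap : (fun n => (c n • !![0, a n; b n, 0]).map diagonal) =
        (diagonalRingHom (Idx p N) ℂ).mapMatrix ∘ fun n => c n • !![0, a n; b n, 0] := rfl
    rw [hmap, ← List.map_map, ← List.map_reverse, ← map_list_prod,
      Matrix.list_prod_reverse_smul_antidiag_of_even hN]
    ext i j : 1
    fin_cases i <;> fin_cases j <;> simp [diagonal_smul]

theorem tendsto_pow_smul_Mon_nhdsNE_zero (hξ : ∀ n, ξ n ≠ 0) (hN : Even N) :
    Tendsto (fun lam => lam ^ N • Mon p N q κ ξ u v lam) (𝓝[≠] 0)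
      (𝓝 ((∏ n, κ n * ξ n / I) • !![ThetaInv p N q v, 0; 0, Theta p N q v])) := by
  have hsign : ∏ n, -(κ n * ξ n / I) = ∏ n, κ n * ξ n / I := by
    rw [Finset.prod_neg, Finset.card_univ, Fintype.card_fin, hN.neg_one_pow, one_mul]
  rw [Theta_eq, ThetaInv_eq, ← hsign]
  refine tendsto_pow_smul_Mon_of_tendsto_smul_Lax p q κ ξ u v hN id _ _ _ fun n => ?_
  obtain ⟨B, hB⟩ := smul_Lax_eq_quadratic p q κ ξ u v (hξ n)
  exact tendsto_smul_nhdsNE_zero_of_quadratic hB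

theorem tendsto_inv_pow_smul_Mon_cobounded (hξ : ∀ n, ξ n ≠ 0) (hN : Even N) :
    Tendsto (fun lam => lam⁻¹ ^ N • Mon p N q κ ξ u v lam) (Bornology.cobounded ℂ)
      (𝓝 ((∏ n, κ n * (ξ n)⁻¹ / I) • !![Theta p N q v, 0; 0, ThetaInv p N q v])) := by
  rw [Theta_eq, ThetaInv_eq]
  refine tendsto_pow_smul_Mon_of_tendsto_smul_Lax p q κ ξ u v hN Inv.inv _ _ _ fun n => ?_
  obtain ⟨B, hB⟩ := smul_Lax_eq_quadratic p q κ ξ u v (hξ n)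
  exact tendsto_inv_smul_cobounded_of_quadratic hB

theorem statement1_general (p N : ℕ) [NeZero p] (q : ℂ) (κ ξ u v : Fin N → ℂ) (hξ : ∀ n, ξ n ≠ 0)
    (hNeven : Even N) :
    ∀ f g : Idx p N,
      Tendsto (fun lam : ℂ => lam ^ N * Amat p N q κ ξ u v lam f g) (𝓝[≠] (0 : ℂ))
        (𝓝 ((∏ a : Fin N, κ a * ξ a / Complex.I) * ThetaInv p N q v f g)) ∧
      Tendsto (fun lam : ℂ => lam ^ (-(N : ℤ)) * Amat p N q κ ξ u v lam f g)
        (Bornology.cobounded ℂ)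
        (𝓝 ((∏ a : Fin N, κ a * (ξ a)⁻¹ / Complex.I) * Theta p N q v f g)) ∧
      Tendsto (fun lam : ℂ => lam ^ N * Dmat p N q κ ξ u v lam f g) (𝓝[≠] (0 : ℂ))
        (𝓝 ((∏ a : Fin N, κ a * ξ a / Complex.I) * Theta p N q v f g)) ∧
      Tendsto (fun lam : ℂ => lam ^ (-(N : ℤ)) * Dmat p N q κ ξ u v lam f g)
        (Bornology.cobounded ℂ)
        (𝓝 ((∏ a : Fin N, κ a * (ξ a)⁻¹ / Complex.I) * ThetaInv p N q v f g)) := by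
  intro f g
  have hzero := tendsto_pow_smul_Mon_nhdsNE_zero p q κ ξ u v hξ hNeven
  have hinfty := tendsto_inv_pow_smul_Mon_cobounded p q κ ξ u v hξ hNeven
  simp only [_root_.zpow_neg, zpow_natCast, ← inv_pow]
  refine ⟨?_, ?_, ?_, ?_⟩
  · simpa [Amat] using (((hzero.apply_nhds 0).apply_nhds 0).apply_nhds f).apply_nhds g
  · simpa [Amat] using (((hinfty.apply_nhds 0).apply_nhds 0).apply_nhds f).apply_nhds g
  · simpa [Dmat] using (((hzero.apply_nhds 1).apply_nhds 1).apply_nhds f).apply_nhds g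
  · simpa [Dmat] using (((hinfty.apply_nhds 1).apply_nhds 1).apply_nhds f).apply_nhds g

/-- For `N` even, entrywise asymptotics of `A(λ)` and `D(λ)`:
`lim_{λ→0} λ^N A(λ) = (∏ κ_a ξ_a/i)·Θ^{-1}`, `lim_{λ→∞} λ^{-N} A(λ) = (∏ κ_a ξ_a^{-1}/i)·Θ`,
`lim_{λ→0} λ^N D(λ) = (∏ κ_a ξ_a/i)·Θ`, `lim_{λ→∞} λ^{-N} D(λ) = (∏ κ_a ξ_a^{-1}/i)·Θ^{-1}`. -/
theorem statement1 (p N : ℕ) [NeZero p] (hp : Odd p) (hp1 : 1 < p)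
    (q : ℂ) (hq : IsPrimitiveRoot q p)
    (κ ξ u v : Fin N → ℂ) (hκ : ∀ n, κ n ≠ 0) (hξ : ∀ n, ξ n ≠ 0)
    (hu : ∀ n, ‖u n‖ = 1) (hv : ∀ n, ‖v n‖ = 1)
    (hN : 0 < N) (hNeven : Even N) :
    ∀ f g : Idx p N,
      Tendsto (fun lam : ℂ => lam ^ N * Amat p N q κ ξ u v lam f g) (𝓝[≠] (0 : ℂ))
        (𝓝 ((∏ a : Fin N, κ a * ξ a / Complex.I) * ThetaInv p N q v f g)) ∧
      Tendsto (fun lam : ℂ => lam ^ (-(N : ℤ)) * Amat p N q κ ξ u v lam f g)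
        (Bornology.cobounded ℂ)
        (𝓝 ((∏ a : Fin N, κ a * (ξ a)⁻¹ / Complex.I) * Theta p N q v f g)) ∧
      Tendsto (fun lam : ℂ => lam ^ N * Dmat p N q κ ξ u v lam f g) (𝓝[≠] (0 : ℂ))
        (𝓝 ((∏ a : Fin N, κ a * ξ a / Complex.I) * Theta p N q v f g)) ∧
      Tendsto (fun lam : ℂ => lam ^ (-(N : ℤ)) * Dmat p N q κ ξ u v lam f g)
        (Bornology.cobounded ℂ)
        (𝓝 ((∏ a : Fin N, κ a * (ξ a)⁻¹ / Complex.I) * ThetaInv p N q v f g)) :=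
  statement1_general p N q κ ξ u v hξ hNeven

end SG
end

section
/- For N even, the transfer matrix has the asymptotic behavior lim_{λ→0} λ^{N} T(λ) = (∏_{a=1}^{N} κ_aξ_a/i)·(Θ + Θ^{−1}) and lim_{λ→∞} λ^{−N} T(λ) = (∏_{a=1}^{N} κ_aξ_a^{−1}/i)·(Θ + Θ^{−1}) (limits taken entrywise, λ ranging over ℂ∖{0}). -/
/-!
Each Lax matrix is a Laurent polynomial `L_n(λ) = λ⁻¹ L⁻_n + L⁰_n + λ L⁺_n` whose outer
coefficients `L^±_n` are off-diagonal with diagonal (hence commuting) entries built from `𝗏_n^{±1}`.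
Hence `λ^N M(λ)` is a polynomial in `λ` and `λ^{-N} M(λ)` a polynomial in `λ⁻¹`, with values
`L⁻_N ⋯ L⁻_1` and `L⁺_N ⋯ L⁺_1` at `0`. For `N` even a product of `N` off-diagonal matrices is
diagonal, its two entries alternating between the upper and lower entries of the factors; here
they collect into `Θ` and `Θ⁻¹`, and the trace gives `Θ + Θ⁻¹`.
-/

open Matrix Complex Filter Topology

theorem List.finRange_add_two_reverse (n : ℕ) :
    (List.finRange (n + 2)).reverse = Fin.last (n + 1) :: (Fin.last n).castSucc ::
      (List.finRange n).reverse.map fun i => i.castSucc.castSucc := by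
  simp [List.finRange_succ_last (n := n + 1), List.finRange_succ_last (n := n), List.map_map,
    Function.comp_def]

theorem Matrix.prod_antidiag_of_even {R : Type*} [CommRing R] {N : ℕ} (hN : Even N)
    (a b : Fin N → R) :
    ((List.finRange N).reverse.map fun n => !![0, a n; b n, 0]).prod =
      !![∏ n : Fin N, if Even (n : ℕ) then b n else a n, 0;
        0, ∏ n : Fin N, if Even (n : ℕ) then a n else b n] := by
  induction N using Nat.twoStepInduction with
  | zero => simp [one_fin_two]
  | one => exact absurd hN Nat.not_even_one
  | more n ih _ =>
    have hn : Even n := by simpa [Nat.even_add] using hN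
    have hn1 : ¬Even (n + 1) := by simpa [Nat.even_add_one] using hn
    rw [List.finRange_add_two_reverse, List.map_cons, List.map_cons, List.map_map,
      List.prod_cons, List.prod_cons, Function.comp_def,
      ih hn (fun i => a i.castSucc.castSucc) (fun i => b i.castSucc.castSucc),
      Fin.prod_univ_castSucc, Fin.prod_univ_castSucc, Fin.prod_univ_castSucc (n := n + 1),
      Fin.prod_univ_castSucc (n := n)]
    ext i j
    fin_cases i <;> fin_cases j <;> simp [hn, hn1] <;> ring

theorem Matrix.prod_antidiag_diagonal_of_even {ι R : Type*} [Fintype ι] [DecidableEq ι]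
    [CommRing R] {N : ℕ} (hN : Even N) (a b : Fin N → ι → R) :
    ((List.finRange N).reverse.map fun n => !![0, diagonal (a n); diagonal (b n), 0]).prod =
      !![diagonal (∏ n : Fin N, if Even (n : ℕ) then b n else a n), 0;
        0, diagonal (∏ n : Fin N, if Even (n : ℕ) then a n else b n)] := by
  have h := congrArg (diagonalRingHom ι R).mapMatrix (prod_antidiag_of_even hN a b)
  rw [map_list_prod, List.map_map] at h
  convert h using 1
  · congr 2
    funext n
    ext i j : 2
    fin_cases i <;> fin_cases j <;> simp
  · ext i j : 2
    fin_cases i <;> fin_cases j <;> simp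

theorem tendsto_pow_smul_prod_laurent {α 𝕜 M : Type*} [Field 𝕜] [TopologicalSpace 𝕜]
    [IsTopologicalRing 𝕜] [Ring M] [Algebra 𝕜 M] [TopologicalSpace M] [IsTopologicalRing M]
    [ContinuousSMul 𝕜 M] (l : List α) (A B C : α → M) :
    Tendsto (fun μ : 𝕜 => μ ^ l.length • (l.map fun n => μ⁻¹ • A n + B n + μ • C n).prod)
      (𝓝[≠] 0) (𝓝 (l.map A).prod) := by
  have hcont : Continuous fun μ : 𝕜 => (l.map fun n => A n + μ • B n + μ ^ 2 • C n).prod :=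
    continuous_list_prod _ fun n _ => by fun_prop
  have h : Tendsto _ (𝓝[≠] (0 : 𝕜)) _ := tendsto_nhdsWithin_of_tendsto_nhds (hcont.tendsto 0)
  simp only [zero_smul, ne_eq, OfNat.ofNat_ne_zero, not_false_eq_true, zero_pow, add_zero] at h
  refine h.congr' ?_
  filter_upwards [self_mem_nhdsWithin] with μ hμ
  rw [← List.length_map (fun n => μ⁻¹ • A n + B n + μ • C n), List.smul_prod, List.map_map]
  congr 1
  refine List.map_congr_left fun n _ => ?_
  simp only [Function.comp_apply, smul_add, smul_smul, mul_inv_cancel₀ hμ, one_smul, pow_two]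

theorem prod_ite_even_inv_eq_smul_prod_zpow {ι K : Type*} [Field K] {N : ℕ} (c : Fin N → K)
    (x : Fin N → ι → K) :
    (∏ n : Fin N, if Even (n : ℕ) then c n • (fun i => (x n i)⁻¹) else c n • fun i => x n i) =
      (∏ n, c n) • fun i => ∏ n : Fin N, x n i ^ ((-1 : ℤ) ^ ((n : ℕ) + 1)) := by
  funext i
  simp only [Finset.prod_apply, Pi.smul_apply, smul_eq_mul, ← Finset.prod_mul_distrib]
  refine Finset.prod_congr rfl fun n _ => ?_
  rcases Nat.even_or_odd (n : ℕ) with hn | hn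
  · simp [hn, hn.add_one.neg_one_pow]
  · simp [Nat.not_even_iff_odd.2 hn, hn.add_one.neg_one_pow]

theorem prod_ite_even_eq_smul_prod_zpow {ι K : Type*} [Field K] {N : ℕ} (c : Fin N → K)
    (x : Fin N → ι → K) :
    (∏ n : Fin N, if Even (n : ℕ) then c n • (fun i => x n i) else c n • fun i => (x n i)⁻¹) =
      (∏ n, c n) • fun i => ∏ n : Fin N, x n i ^ ((-1 : ℤ) ^ (n : ℕ)) := by
  funext i
  simp only [Finset.prod_apply, Pi.smul_apply, smul_eq_mul, ← Finset.prod_mul_distrib]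
  refine Finset.prod_congr rfl fun n _ => ?_
  rcases Nat.even_or_odd (n : ℕ) with hn | hn
  · simp [hn, hn.neg_one_pow]
  · simp [Nat.not_even_iff_odd.2 hn, hn.neg_one_pow]

namespace SG

section Lax

variable (p N : ℕ) [NeZero p] (q : ℂ) (κ ξ u v : Fin N → ℂ)

noncomputable def laxPlus (n : Fin N) : Matrix (Fin 2) (Fin 2) (Op p N) :=
  !![0, (κ n * (ξ n)⁻¹ / Complex.I) • vop p N q v n;
    (κ n * (ξ n)⁻¹ / Complex.I) • vopInv p N q v n, 0]

noncomputable def laxDiag (n : Fin N) : Matrix (Fin 2) (Fin 2) (Op p N) :=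
  !![κ n • (uop p N u n *
        ((qh p q)⁻¹ • (κ n • vop p N q v n) + qh p q • ((κ n)⁻¹ • vopInv p N q v n))), 0;
    0, κ n • (uopInv p N u n *
        (qh p q • ((κ n)⁻¹ • vop p N q v n) + (qh p q)⁻¹ • (κ n • vopInv p N q v n)))]

noncomputable def laxMinus (n : Fin N) : Matrix (Fin 2) (Fin 2) (Op p N) :=
  !![0, (-(κ n * ξ n) / Complex.I) • vopInv p N q v n;
    (-(κ n * ξ n) / Complex.I) • vop p N q v n, 0]

theorem lax_eq_laurent {n : Fin N} (hξ : ξ n ≠ 0) {lam : ℂ} (hlam : lam ≠ 0) :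
    Lax p N q κ ξ u v n lam =
      lam⁻¹ • laxMinus p N q κ ξ v n + laxDiag p N q κ u v n + lam • laxPlus p N q κ ξ v n := by
  ext i j : 2
  fin_cases i <;> fin_cases j <;> simp [Lax, laxPlus, laxDiag, laxMinus] <;> field_simp <;> ring

theorem mon_eq_prod_laurent (hξ : ∀ n, ξ n ≠ 0) {lam : ℂ} (hlam : lam ≠ 0) :
    Mon p N q κ ξ u v lam = ((List.finRange N).reverse.map fun n => lam⁻¹ • laxMinus p N q κ ξ v n +
      laxDiag p N q κ u v n + lam • laxPlus p N q κ ξ v n).prod := by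
  rw [Mon, ← List.map_reverse]
  exact congrArg _ (List.map_congr_left fun n _ => lax_eq_laurent p N q κ ξ u v (hξ n) hlam)

theorem tmat_eq_trace (lam : ℂ) : Tmat p N q κ ξ u v lam = (Mon p N q κ ξ u v lam).trace :=
  (trace_fin_two _).symm

theorem prod_laxPlus (hN : Even N) :
    ((List.finRange N).reverse.map (laxPlus p N q κ ξ v)).prod =
      !![(∏ n, κ n * (ξ n)⁻¹ / Complex.I) • Theta p N q v, 0;
        0, (∏ n, κ n * (ξ n)⁻¹ / Complex.I) • ThetaInv p N q v] := by
  unfold laxPlus vop vopInv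
  simp only [← diagonal_smul]
  rw [prod_antidiag_diagonal_of_even hN, prod_ite_even_inv_eq_smul_prod_zpow,
    prod_ite_even_eq_smul_prod_zpow, Theta, ThetaInv, diagonal_smul, diagonal_smul]

theorem prod_laxMinus (hN : Even N) :
    ((List.finRange N).reverse.map (laxMinus p N q κ ξ v)).prod =
      !![(∏ n, κ n * ξ n / Complex.I) • ThetaInv p N q v, 0;
        0, (∏ n, κ n * ξ n / Complex.I) • Theta p N q v] := by
  have hsign : ∏ n, -(κ n * ξ n) / Complex.I = ∏ n, κ n * ξ n / Complex.I := by
    simp only [neg_div, Finset.prod_neg, Finset.card_univ, Fintype.card_fin, hN.neg_one_pow,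
      one_mul]
  unfold laxMinus vop vopInv
  simp only [← diagonal_smul]
  rw [prod_antidiag_diagonal_of_even hN, prod_ite_even_inv_eq_smul_prod_zpow,
    prod_ite_even_eq_smul_prod_zpow, Theta, ThetaInv, diagonal_smul, diagonal_smul, hsign]

end Lax

theorem statement2_general (p N : ℕ) [NeZero p] (q : ℂ)
    (κ ξ u v : Fin N → ℂ) (hξ : ∀ n, ξ n ≠ 0) (hNeven : Even N) :
    ∀ f g : Idx p N,
      Tendsto (fun lam : ℂ => lam ^ N * Tmat p N q κ ξ u v lam f g) (𝓝[≠] (0 : ℂ))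
        (𝓝 ((∏ a : Fin N, κ a * ξ a / Complex.I) *
          (Theta p N q v + ThetaInv p N q v) f g)) ∧
      Tendsto (fun lam : ℂ => lam ^ (-(N : ℤ)) * Tmat p N q κ ξ u v lam f g)
        (Bornology.cobounded ℂ)
        (𝓝 ((∏ a : Fin N, κ a * (ξ a)⁻¹ / Complex.I) *
          (Theta p N q v + ThetaInv p N q v) f g)) := by
  intro f g
  have hentry : Continuous fun M : Matrix (Fin 2) (Fin 2) (Op p N) => M.trace f g :=
    (continuous_id.matrix_trace).matrix_elem f g
  have hT (c lam : ℂ) :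
      c * Tmat p N q κ ξ u v lam f g = (c • Mon p N q κ ξ u v lam).trace f g := by
    simp [tmat_eq_trace, trace_smul]
  constructor
  · have h := (hentry.tendsto _).comp <| tendsto_pow_smul_prod_laurent (𝕜 := ℂ)
      (List.finRange N).reverse (laxMinus p N q κ ξ v) (laxDiag p N q κ u v) (laxPlus p N q κ ξ v)
    rw [prod_laxMinus p N q κ ξ v hNeven, trace_fin_two] at h
    refine Tendsto.congr' ?_ (by convert h using 2; simp [add_comm, mul_add])
    filter_upwards [self_mem_nhdsWithin] with lam hlam
    rw [Function.comp_apply, hT, mon_eq_prod_laurent p N q κ ξ u v hξ hlam, List.length_reverse,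
      List.length_finRange]
  · have h := (hentry.tendsto _).comp <| (tendsto_pow_smul_prod_laurent (𝕜 := ℂ)
      (List.finRange N).reverse (laxPlus p N q κ ξ v) (laxDiag p N q κ u v)
      (laxMinus p N q κ ξ v)).comp tendsto_inv₀_cobounded'
    rw [prod_laxPlus p N q κ ξ v hNeven, trace_fin_two] at h
    refine Tendsto.congr' ?_ (by convert h using 2; simp [mul_add])
    filter_upwards [Bornology.eventually_ne_cobounded 0] with lam hlam
    rw [Function.comp_apply, Function.comp_apply, hT, mon_eq_prod_laurent p N q κ ξ u v hξ hlam,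
      List.length_reverse, List.length_finRange, inv_inv, _root_.zpow_neg, zpow_natCast, inv_pow]
    congr! 5 with n
    abel

/-- For `N` even, entrywise asymptotics of the transfer matrix:
`lim_{λ→0} λ^N T(λ) = (∏ κ_a ξ_a/i)·(Θ + Θ^{-1})` and
`lim_{λ→∞} λ^{-N} T(λ) = (∏ κ_a ξ_a^{-1}/i)·(Θ + Θ^{-1})`. -/
theorem statement2 (p N : ℕ) [NeZero p] (hp : Odd p) (hp1 : 1 < p)
    (q : ℂ) (hq : IsPrimitiveRoot q p)
    (κ ξ u v : Fin N → ℂ) (hκ : ∀ n, κ n ≠ 0) (hξ : ∀ n, ξ n ≠ 0)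
    (hu : ∀ n, ‖u n‖ = 1) (hv : ∀ n, ‖v n‖ = 1)
    (hN : 0 < N) (hNeven : Even N) :
    ∀ f g : Idx p N,
      Tendsto (fun lam : ℂ => lam ^ N * Tmat p N q κ ξ u v lam f g) (𝓝[≠] (0 : ℂ))
        (𝓝 ((∏ a : Fin N, κ a * ξ a / Complex.I) *
          (Theta p N q v + ThetaInv p N q v) f g)) ∧
      Tendsto (fun lam : ℂ => lam ^ (-(N : ℤ)) * Tmat p N q κ ξ u v lam f g)
        (Bornology.cobounded ℂ)
        (𝓝 ((∏ a : Fin N, κ a * (ξ a)⁻¹ / Complex.I) *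
          (Theta p N q v + ThetaInv p N q v) f g)) :=
  statement2_general p N q κ ξ u v hξ hNeven

end SG
end

section
/- Assume that κ_n² and ξ_n² are real for every n = 1,…,N and that ε := −(κ_nξ_n)/(κ_n^*ξ_n^*) does not depend on n. Then for every nonzero λ ∈ ℂ the conjugate transposes of the monodromy entries satisfy A(λ)† = D(λ^*), B(λ)† = C(ελ^*), C(λ)† = B(ελ^*), D(λ)† = A(λ^*); in particular the transfer matrix T(λ) is self-adjoint for every nonzero real λ. -/
open Matrix Complex Filter Topology

namespace SG

/-!
The shift `𝗎_n` and clock `𝗏_n` are unitary and obey the Weyl relation `𝗏_n 𝗎_n⁻¹ = q 𝗎_n⁻¹ 𝗏_n`.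
Using these, taking the adjoint of each entry of `L_n(λ)` and moving `𝗎_n⁻¹` back to the left
gives `L_n(λ)_{ij}† = L_n(ελ^*)_{σi σj}` with `σ` the swap of `{0, 1}`; the reality of `κ_n²`
and `q^{1/2}² = q` are what make the coefficients match. Operators at different sites commute,
so the reversal of order caused by `†` is harmless and the entrywise adjoint of the monodromy
matrix is `M(ελ^*)` with rows and columns swapped. Finally `ε² = 1`, and conjugating by
`diag(1, -1)` shows that the diagonal entries of `M(λ)` are even in `λ`, so `ε` drops out of
`A` and `D`.
-/

section ShiftMatrix

variable {G R : Type*} [AddCommGroup G] [DecidableEq G]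

def shiftMatrix [Zero R] (c : R) (δ : G) : Matrix G G R :=
  of fun f g => if f = g + δ then c else 0

lemma conjTranspose_shiftMatrix [AddMonoid R] [StarAddMonoid R] (c : R) (δ : G) :
    (shiftMatrix c δ)ᴴ = shiftMatrix (star c) (-δ) := by
  ext f g
  simp only [conjTranspose_apply, shiftMatrix, of_apply, ← sub_eq_add_neg, eq_sub_iff_add_eq,
    eq_comm (a := g)]
  split_ifs <;> simp

variable [Fintype G]

lemma shiftMatrix_mul_shiftMatrix [Semiring R] (c c' : R) (δ δ' : G) :
    shiftMatrix c δ * shiftMatrix c' δ' = shiftMatrix (c * c') (δ + δ') := by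
  ext f g
  simp [shiftMatrix, mul_apply, add_assoc, add_comm δ']

lemma commute_shiftMatrix [CommSemiring R] (c c' : R) (δ δ' : G) :
    Commute (shiftMatrix c δ) (shiftMatrix c' δ') := by
  rw [Commute, SemiconjBy, shiftMatrix_mul_shiftMatrix, shiftMatrix_mul_shiftMatrix, mul_comm,
    add_comm]

lemma diagonal_mul_shiftMatrix [CommSemiring R] {d : G → R} {a : R} (c : R) {δ : G}
    (hd : ∀ g, d (g + δ) = a * d g) :
    diagonal d * shiftMatrix c δ = a • (shiftMatrix c δ * diagonal d) := by
  ext f g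
  simp only [diagonal_mul, mul_diagonal, Matrix.smul_apply, shiftMatrix, of_apply, smul_eq_mul]
  split_ifs with h
  · rw [h, hd]; ring
  · simp

end ShiftMatrix

section EntrywiseStar

variable {ι R : Type*} [Fintype ι] [Semiring R]

lemma commute_list_prod_apply [DecidableEq ι] {x : R} {l : List (Matrix ι ι R)}
    (h : ∀ A ∈ l, ∀ i j, Commute x (A i j)) (i j : ι) : Commute x (l.prod i j) := by
  induction l generalizing i j with
  | nil =>
    rw [List.prod_nil, one_apply]
    split_ifs
    exacts [Commute.one_right x, Commute.zero_right x]
  | cons A l ih =>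
    rw [List.prod_cons, mul_apply]
    exact Commute.sum_right _ _ _ fun k _ =>
      (h A List.mem_cons_self i k).mul_right (ih (fun B hB => h B (List.mem_cons_of_mem _ hB)) k j)

variable [StarRing R]

lemma map_star_mul_of_commute {A B : Matrix ι ι R} (h : ∀ i j k l, Commute (A i j) (B k l)) :
    (A * B).map star = A.map star * B.map star := by
  ext i j
  simp only [map_apply, mul_apply, star_sum, star_mul]
  exact Finset.sum_congr rfl fun k _ => ((h i k k j).star_star).eq.symm

lemma map_star_list_prod [DecidableEq ι] {l : List (Matrix ι ι R)}
    (h : l.Pairwise fun A B => ∀ i j k l, Commute (A i j) (B k l)) :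
    l.prod.map star = (l.map (·.map star)).prod := by
  induction l with
  | nil => simp
  | cons A l ih =>
    rw [List.pairwise_cons] at h
    rw [List.prod_cons, map_star_mul_of_commute fun i j k l =>
      commute_list_prod_apply (fun B hB => h.1 B hB i j) k l, ih h.2, List.map_cons, List.prod_cons]

end EntrywiseStar

lemma list_prod_map_conj_of_mul_self_eq_one {M : Type*} [Monoid M] {J : M} (hJ : J * J = 1)
    (l : List M) : (l.map fun A => J * A * J).prod = J * l.prod * J := by
  induction l with
  | nil => simp [hJ]
  | cons A l ih =>
    rw [List.map_cons, List.prod_cons, ih, List.prod_cons]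
    simp only [mul_assoc]
    rw [← mul_assoc J J, hJ, one_mul]

section Scalars

variable {p : ℕ} {q : ℂ}

lemma pow_val_add_one [NeZero p] (hq : q ^ p = 1) (k : ZMod p) :
    q ^ (k + 1).val = q * q ^ k.val := by
  rw [ZMod.val_add, ← pow_eq_pow_mod _ hq, pow_add, ZMod.val_one_eq_one_mod,
    ← pow_eq_pow_mod _ hq, pow_one, mul_comm]

lemma qh_sq (hp : Odd p) (hq : q ^ p = 1) : qh p q ^ 2 = q := by
  obtain ⟨k, rfl⟩ := hp
  rw [qh, sq, ← pow_add, show (2 * k + 1 + 1) / 2 + (2 * k + 1 + 1) / 2 = 2 * k + 1 + 1 by omega,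
    pow_succ, hq, one_mul]

lemma conj_qh (hq : ‖q‖ = 1) : (starRingEnd ℂ) (qh p q) = (qh p q)⁻¹ := by
  rw [qh, map_pow, ← Complex.inv_eq_conj hq, inv_pow]

lemma conj_lax_offDiag_coeff {κ ξ ε : ℂ} (hκ : κ ≠ 0) (hξ : ξ ≠ 0)
    (hκR : (starRingEnd ℂ) (κ ^ 2) = κ ^ 2)
    (hε : -(κ * ξ) / ((starRingEnd ℂ) κ * (starRingEnd ℂ) ξ) = ε) (lam : ℂ) :
    (starRingEnd ℂ) (κ / I * (lam / ξ)) = κ / I * (ε * (starRingEnd ℂ) lam / ξ) ∧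
      (starRingEnd ℂ) (κ / I * (lam / ξ)⁻¹) = κ / I * (ε * (starRingEnd ℂ) lam / ξ)⁻¹ := by
  have hκc : (starRingEnd ℂ) κ ≠ 0 := by simpa using hκ
  have hξc : (starRingEnd ℂ) ξ ≠ 0 := by simpa using hξ
  rw [map_pow] at hκR
  subst hε
  simp only [map_mul, map_div₀, map_inv₀, conj_I]
  constructor <;> field_simp
  linear_combination -(starRingEnd ℂ) lam * hκR

lemma sq_eq_one_of_neg_div_conj {κ ξ ε : ℂ} (hκ : κ ≠ 0) (hξ : ξ ≠ 0)
    (hκR : (starRingEnd ℂ) (κ ^ 2) = κ ^ 2) (hξR : (starRingEnd ℂ) (ξ ^ 2) = ξ ^ 2)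
    (hε : -(κ * ξ) / ((starRingEnd ℂ) κ * (starRingEnd ℂ) ξ) = ε) : ε ^ 2 = 1 := by
  rw [← hε, div_pow, neg_sq, mul_pow, mul_pow, ← map_pow, ← map_pow, hκR, hξR]
  exact div_self (by simp [hκ, hξ])

end Scalars

section SiteOperators

variable {p N : ℕ} {q : ℂ} {u v : Fin N → ℂ} {n m : Fin N}

lemma update_add_eq_add_single (g : Idx p N) (n : Fin N) (x : ZMod p) :
    Function.update g n (g n + x) = g + Pi.single n x := by
  funext k
  rcases eq_or_ne k n with rfl | hk <;> simp [*]

lemma uop_eq_shiftMatrix : uop p N u n = shiftMatrix (u n) (Pi.single n (-1)) := by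
  simp [uop, shiftMatrix, sub_eq_add_neg, update_add_eq_add_single]

lemma uopInv_eq_shiftMatrix : uopInv p N u n = shiftMatrix (u n)⁻¹ (Pi.single n 1) := by
  simp [uopInv, shiftMatrix, update_add_eq_add_single]

lemma conjTranspose_uop (hu : ‖u n‖ = 1) : (uop p N u n)ᴴ = uopInv p N u n := by
  rw [uop_eq_shiftMatrix, uopInv_eq_shiftMatrix, conjTranspose_shiftMatrix, Complex.star_def,
    ← Complex.inv_eq_conj hu, ← Pi.single_neg, neg_neg]

lemma conjTranspose_vop (hq : ‖q‖ = 1) (hv : ‖v n‖ = 1) : (vop p N q v n)ᴴ = vopInv p N q v n := by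
  rw [vop, vopInv, diagonal_conjTranspose]
  congr 1
  funext g
  simp [← Complex.inv_eq_conj, hq, hv, mul_comm]

lemma conjTranspose_vopInv (hq : ‖q‖ = 1) (hv : ‖v n‖ = 1) :
    (vopInv p N q v n)ᴴ = vop p N q v n := by
  rw [← conjTranspose_vop hq hv, conjTranspose_conjTranspose]

variable [NeZero p]

lemma vop_mul_uopInv (hq : q ^ p = 1) :
    vop p N q v n * uopInv p N u n = q • (uopInv p N u n * vop p N q v n) := by
  rw [uopInv_eq_shiftMatrix, vop, diagonal_mul_shiftMatrix]
  intro g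
  simp [pow_val_add_one hq]
  ring

lemma vopInv_mul_uopInv (hq : q ^ p = 1) :
    vopInv p N q v n * uopInv p N u n = q⁻¹ • (uopInv p N u n * vopInv p N q v n) := by
  rw [uopInv_eq_shiftMatrix, vopInv, diagonal_mul_shiftMatrix]
  intro g
  simp [pow_val_add_one hq]
  ring

def siteGenerators (p N : ℕ) (n : Fin N) : Set (Op p N) :=
  {X | (∃ (c : ℂ) (x : ZMod p), X = shiftMatrix c (Pi.single n x)) ∨
    ∃ φ : ZMod p → ℂ, X = diagonal fun g => φ (g n)}

lemma commute_of_mem_siteGenerators {X Y : Op p N} (hnm : n ≠ m) (hX : X ∈ siteGenerators p N n)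
    (hY : Y ∈ siteGenerators p N m) : Commute X Y := by
  have diagonal_commute_shift : ∀ {n m : Fin N} (φ : ZMod p → ℂ) (c : ℂ) (x : ZMod p), n ≠ m →
      Commute (diagonal fun g : Idx p N => φ (g m)) (shiftMatrix c (Pi.single n x)) := by
    intro n m φ c x hnm
    rw [Commute, SemiconjBy, diagonal_mul_shiftMatrix c (a := 1), one_smul]
    simp [hnm.symm]
  rcases hX with ⟨c, x, rfl⟩ | ⟨φ, rfl⟩ <;> rcases hY with ⟨c', x', rfl⟩ | ⟨φ', rfl⟩
  · exact commute_shiftMatrix c c' _ _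
  · exact (diagonal_commute_shift φ' c x hnm).symm
  · exact diagonal_commute_shift φ c' x' hnm.symm
  · exact commute_diagonal _ _

def siteAlgebra (p N : ℕ) [NeZero p] (n : Fin N) : Subalgebra ℂ (Op p N) :=
  Algebra.adjoin ℂ (siteGenerators p N n)

lemma commute_of_mem_siteAlgebra {X Y : Op p N} (hnm : n ≠ m) (hX : X ∈ siteAlgebra p N n)
    (hY : Y ∈ siteAlgebra p N m) : Commute X Y :=
  Algebra.commute_of_mem_adjoin_of_forall_mem_commute hY fun _ hY' =>
    (Algebra.commute_of_mem_adjoin_of_forall_mem_commute hX fun _ hX' =>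
      (commute_of_mem_siteGenerators hnm hX' hY').symm).symm

lemma lax_apply_mem_siteAlgebra (κ ξ : Fin N → ℂ) (lam : ℂ) (i j : Fin 2) :
    Lax p N q κ ξ u v n lam i j ∈ siteAlgebra p N n := by
  have hu : uop p N u n ∈ siteAlgebra p N n :=
    Algebra.subset_adjoin (Or.inl ⟨_, _, uop_eq_shiftMatrix⟩)
  have hu' : uopInv p N u n ∈ siteAlgebra p N n :=
    Algebra.subset_adjoin (Or.inl ⟨_, _, uopInv_eq_shiftMatrix⟩)
  have hv : vop p N q v n ∈ siteAlgebra p N n :=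
    Algebra.subset_adjoin (Or.inr ⟨fun x => v n * q ^ x.val, rfl⟩)
  have hv' : vopInv p N q v n ∈ siteAlgebra p N n :=
    Algebra.subset_adjoin (Or.inr ⟨fun x => (v n * q ^ x.val)⁻¹, rfl⟩)
  fin_cases i <;> fin_cases j <;> simp [Lax] <;>
    apply_rules [Subalgebra.smul_mem, mul_mem, add_mem, sub_mem]

end SiteOperators

section Lax

variable {p N : ℕ} [NeZero p] {q : ℂ} {κ ξ u v : Fin N → ℂ} {n : Fin N}

lemma conjTranspose_lax_zero_zero (hp : Odd p) (hq : IsPrimitiveRoot q p)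
    (hu : ‖u n‖ = 1) (hv : ‖v n‖ = 1) (hκn : κ n ≠ 0)
    (hκR : (starRingEnd ℂ) (κ n ^ 2) = κ n ^ 2) (lam lam' : ℂ) :
    (Lax p N q κ ξ u v n lam 0 0)ᴴ = Lax p N q κ ξ u v n lam' 1 1 := by
  have hqn : ‖q‖ = 1 := hq.norm'_eq_one (NeZero.ne p)
  have hq0 : q ≠ 0 := hq.ne_zero (NeZero.ne p)
  have hh0 : qh p q ≠ 0 := pow_ne_zero _ hq0
  have hκc : (starRingEnd ℂ) (κ n) ≠ 0 := by simpa using hκn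
  have hh := qh_sq hp hq.pow_eq_one
  simp only [Lax, of_apply, cons_val', cons_val_zero, cons_val_one, empty_val', cons_val_fin_one]
  simp only [conjTranspose_smul, conjTranspose_mul, conjTranspose_add, conjTranspose_uop hu,
    conjTranspose_vop hqn hv, conjTranspose_vopInv hqn hv, Matrix.mul_add, Matrix.mul_smul,
    vop_mul_uopInv hq.pow_eq_one, vopInv_mul_uopInv hq.pow_eq_one, smul_smul, smul_add,
    Complex.star_def]
  rw [add_comm]
  congr 2 <;> simp only [map_mul, map_inv₀, conj_qh hqn] <;> field_simp
  · exact hh.symm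
  · rw [map_pow] at hκR
    linear_combination qh p q ^ 2 * hκR + κ n ^ 2 * hh

lemma conjTranspose_lax_zero_one (hq : ‖q‖ = 1) (hv : ‖v n‖ = 1) (hκn : κ n ≠ 0)
    (hξn : ξ n ≠ 0) (hκR : (starRingEnd ℂ) (κ n ^ 2) = κ n ^ 2) {ε : ℂ}
    (hε : -(κ n * ξ n) / ((starRingEnd ℂ) (κ n) * (starRingEnd ℂ) (ξ n)) = ε) (lam : ℂ) :
    (Lax p N q κ ξ u v n lam 0 1)ᴴ = Lax p N q κ ξ u v n (ε * (starRingEnd ℂ) lam) 1 0 := by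
  obtain ⟨h₁, h₂⟩ := conj_lax_offDiag_coeff hκn hξn hκR hε lam
  simp only [Lax, of_apply, cons_val', cons_val_zero, cons_val_one, empty_val', cons_val_fin_one]
  simp only [conjTranspose_smul, conjTranspose_sub, conjTranspose_vop hq hv,
    conjTranspose_vopInv hq hv, smul_sub, smul_smul, Complex.star_def, h₁, h₂]

lemma conjTranspose_lax_one_zero (hq : ‖q‖ = 1) (hv : ‖v n‖ = 1) (hκn : κ n ≠ 0)
    (hξn : ξ n ≠ 0) (hκR : (starRingEnd ℂ) (κ n ^ 2) = κ n ^ 2) {ε : ℂ}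
    (hε : -(κ n * ξ n) / ((starRingEnd ℂ) (κ n) * (starRingEnd ℂ) (ξ n)) = ε) (lam : ℂ) :
    (Lax p N q κ ξ u v n lam 1 0)ᴴ = Lax p N q κ ξ u v n (ε * (starRingEnd ℂ) lam) 0 1 := by
  obtain ⟨h₁, h₂⟩ := conj_lax_offDiag_coeff hκn hξn hκR hε lam
  simp only [Lax, of_apply, cons_val', cons_val_zero, cons_val_one, empty_val', cons_val_fin_one]
  simp only [conjTranspose_smul, conjTranspose_sub, conjTranspose_vop hq hv,
    conjTranspose_vopInv hq hv, smul_sub, smul_smul, Complex.star_def, h₁, h₂]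

lemma lax_map_star (hp : Odd p) (hq : IsPrimitiveRoot q p) (hu : ‖u n‖ = 1) (hv : ‖v n‖ = 1)
    (hκn : κ n ≠ 0) (hξn : ξ n ≠ 0) (hκR : (starRingEnd ℂ) (κ n ^ 2) = κ n ^ 2) {ε : ℂ}
    (hε : -(κ n * ξ n) / ((starRingEnd ℂ) (κ n) * (starRingEnd ℂ) (ξ n)) = ε) (lam : ℂ) :
    (Lax p N q κ ξ u v n lam).map star =
      reindex (Equiv.swap 0 1) (Equiv.swap 0 1)
        (Lax p N q κ ξ u v n (ε * (starRingEnd ℂ) lam)) := by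
  have hqn : ‖q‖ = 1 := hq.norm'_eq_one (NeZero.ne p)
  ext i j : 1
  fin_cases i <;> fin_cases j <;> simp only [map_apply, reindex_apply, submatrix_apply,
    Equiv.symm_swap, Fin.zero_eta, Fin.mk_one, Equiv.swap_apply_left, Equiv.swap_apply_right,
    star_eq_conjTranspose]
  · exact conjTranspose_lax_zero_zero hp hq hu hv hκn hκR _ _
  · exact conjTranspose_lax_zero_one hqn hv hκn hξn hκR hε lam
  · exact conjTranspose_lax_one_zero hqn hv hκn hξn hκR hε lam
  · rw [← conjTranspose_lax_zero_zero hp hq hu hv hκn hκR (ε * (starRingEnd ℂ) lam) lam,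
      conjTranspose_conjTranspose]

end Lax

section Monodromy

variable {p N : ℕ} [NeZero p] {q : ℂ} {κ ξ u v : Fin N → ℂ}

lemma commute_lax_apply {n m : Fin N} (hnm : n ≠ m) (lam lam' : ℂ) (i j k l : Fin 2) :
    Commute (Lax p N q κ ξ u v n lam i j) (Lax p N q κ ξ u v m lam' k l) :=
  commute_of_mem_siteAlgebra hnm (lax_apply_mem_siteAlgebra κ ξ lam i j)
    (lax_apply_mem_siteAlgebra κ ξ lam' k l)

lemma mon_map_star (hp : Odd p) (hq : IsPrimitiveRoot q p) (hu : ∀ n, ‖u n‖ = 1)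
    (hv : ∀ n, ‖v n‖ = 1) (hκ : ∀ n, κ n ≠ 0) (hξ : ∀ n, ξ n ≠ 0)
    (hκR : ∀ n, (starRingEnd ℂ) (κ n ^ 2) = κ n ^ 2) {ε : ℂ}
    (hε : ∀ n, -(κ n * ξ n) / ((starRingEnd ℂ) (κ n) * (starRingEnd ℂ) (ξ n)) = ε) (lam : ℂ) :
    (Mon p N q κ ξ u v lam).map star =
      reindex (Equiv.swap 0 1) (Equiv.swap 0 1) (Mon p N q κ ξ u v (ε * (starRingEnd ℂ) lam)) := by
  have hpairwise : ((List.finRange N).map fun n => Lax p N q κ ξ u v n lam).reverse.Pairwise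
      fun A B => ∀ i j k l, Commute (A i j) (B k l) := by
    rw [List.pairwise_reverse, List.pairwise_map]
    exact (List.nodup_finRange N).imp fun hnm i j k l => commute_lax_apply (Ne.symm hnm) _ _ _ _ _ _
  rw [Mon, Mon, map_star_list_prod hpairwise, ← coe_reindexAlgEquiv ℂ, map_list_prod,
    List.map_reverse, List.map_reverse, List.map_map, List.map_map]
  congr 3
  funext n
  exact lax_map_star hp hq (hu n) (hv n) (hκ n) (hξ n) (hκR n) (hε n) lam

def signMatrix (R : Type*) [Ring R] : Matrix (Fin 2) (Fin 2) R := diagonal ![1, -1]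

lemma signMatrix_mul_self (R : Type*) [Ring R] : signMatrix R * signMatrix R = 1 := by
  rw [signMatrix, diagonal_mul_diagonal, ← diagonal_one]
  congr 1
  funext i
  fin_cases i <;> simp

lemma lax_neg (n : Fin N) (lam : ℂ) :
    Lax p N q κ ξ u v n (-lam) =
      signMatrix (Op p N) * Lax p N q κ ξ u v n lam * signMatrix (Op p N) := by
  ext i j : 1
  fin_cases i <;> fin_cases j <;> simp [signMatrix, Lax, neg_div, sub_eq_add_neg, add_comm]

lemma mon_neg (lam : ℂ) :
    Mon p N q κ ξ u v (-lam) =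
      signMatrix (Op p N) * Mon p N q κ ξ u v lam * signMatrix (Op p N) := by
  rw [Mon, Mon, ← list_prod_map_conj_of_mul_self_eq_one (signMatrix_mul_self _), List.map_reverse,
    List.map_map]
  simp only [Function.comp_def, lax_neg]

lemma mon_neg_apply_self (lam : ℂ) (a : Fin 2) :
    Mon p N q κ ξ u v (-lam) a a = Mon p N q κ ξ u v lam a a := by
  rw [mon_neg]
  fin_cases a <;> simp [signMatrix]

end Monodromy

theorem statement3_general (p N : ℕ) [NeZero p] (hp : Odd p)
    (q : ℂ) (hq : IsPrimitiveRoot q p)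
    (κ ξ u v : Fin N → ℂ) (hκ : ∀ n, κ n ≠ 0) (hξ : ∀ n, ξ n ≠ 0)
    (hu : ∀ n, ‖u n‖ = 1) (hv : ∀ n, ‖v n‖ = 1)
    (hN : 0 < N) (ε : ℂ)
    (hκR : ∀ n, (starRingEnd ℂ) (κ n ^ 2) = κ n ^ 2)
    (hξR : ∀ n, (starRingEnd ℂ) (ξ n ^ 2) = ξ n ^ 2)
    (hε : ∀ n, -(κ n * ξ n) / ((starRingEnd ℂ) (κ n) * (starRingEnd ℂ) (ξ n)) = ε) :
    (∀ lam : ℂ, lam ≠ 0 →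
      (Amat p N q κ ξ u v lam)ᴴ = Dmat p N q κ ξ u v ((starRingEnd ℂ) lam) ∧
      (Bmat p N q κ ξ u v lam)ᴴ = Cmat p N q κ ξ u v (ε * (starRingEnd ℂ) lam) ∧
      (Cmat p N q κ ξ u v lam)ᴴ = Bmat p N q κ ξ u v (ε * (starRingEnd ℂ) lam) ∧
      (Dmat p N q κ ξ u v lam)ᴴ = Amat p N q κ ξ u v ((starRingEnd ℂ) lam)) ∧
    (∀ r : ℝ, (r : ℂ) ≠ 0 →
      (Tmat p N q κ ξ u v (r : ℂ))ᴴ = Tmat p N q κ ξ u v (r : ℂ)) := by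
  have hMon (lam : ℂ) (a b : Fin 2) : (Mon p N q κ ξ u v lam a b)ᴴ =
      Mon p N q κ ξ u v (ε * (starRingEnd ℂ) lam) (Equiv.swap 0 1 a) (Equiv.swap 0 1 b) :=
    congrFun₂ (mon_map_star hp hq hu hv hκ hξ hκR hε lam) a b
  have hdiag (mu : ℂ) (a : Fin 2) : Mon p N q κ ξ u v (ε * mu) a a = Mon p N q κ ξ u v mu a a := by
    obtain ⟨n⟩ : Nonempty (Fin N) := ⟨⟨0, hN⟩⟩
    rcases sq_eq_one_iff.mp (sq_eq_one_of_neg_div_conj (hκ n) (hξ n) (hκR n) (hξR n)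
      (hε n)) with rfl | rfl
    · rw [one_mul]
    · rw [neg_one_mul, mon_neg_apply_self]
  have hAD (lam : ℂ) : (Amat p N q κ ξ u v lam)ᴴ = Dmat p N q κ ξ u v ((starRingEnd ℂ) lam) :=
    (hMon lam 0 0).trans (hdiag _ 1)
  have hDA (lam : ℂ) : (Dmat p N q κ ξ u v lam)ᴴ = Amat p N q κ ξ u v ((starRingEnd ℂ) lam) :=
    (hMon lam 1 1).trans (hdiag _ 0)
  refine ⟨fun lam _ => ⟨hAD lam, hMon lam 0 1, hMon lam 1 0, hDA lam⟩, fun r _ => ?_⟩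
  rw [Tmat, conjTranspose_add, hAD, hDA, conj_ofReal, add_comm]

/-- Under the reality conditions on `κ_n²`, `ξ_n²` and uniformity of
`ε = -(κ_nξ_n)/(κ_n^*ξ_n^*)`, the conjugate transposes of the monodromy entries satisfy
`A(λ)† = D(λ^*)`, `B(λ)† = C(ελ^*)`, `C(λ)† = B(ελ^*)`, `D(λ)† = A(λ^*)`; in particular
`T(λ)` is self-adjoint for nonzero real `λ`. -/
theorem statement3 (p N : ℕ) [NeZero p] (hp : Odd p) (hp1 : 1 < p)
    (q : ℂ) (hq : IsPrimitiveRoot q p)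
    (κ ξ u v : Fin N → ℂ) (hκ : ∀ n, κ n ≠ 0) (hξ : ∀ n, ξ n ≠ 0)
    (hu : ∀ n, ‖u n‖ = 1) (hv : ∀ n, ‖v n‖ = 1)
    (hN : 0 < N) (ε : ℂ)
    (hκR : ∀ n, (starRingEnd ℂ) (κ n ^ 2) = κ n ^ 2)
    (hξR : ∀ n, (starRingEnd ℂ) (ξ n ^ 2) = ξ n ^ 2)
    (hε : ∀ n, -(κ n * ξ n) / ((starRingEnd ℂ) (κ n) * (starRingEnd ℂ) (ξ n)) = ε) :
    (∀ lam : ℂ, lam ≠ 0 →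
      (Amat p N q κ ξ u v lam)ᴴ = Dmat p N q κ ξ u v ((starRingEnd ℂ) lam) ∧
      (Bmat p N q κ ξ u v lam)ᴴ = Cmat p N q κ ξ u v (ε * (starRingEnd ℂ) lam) ∧
      (Cmat p N q κ ξ u v lam)ᴴ = Bmat p N q κ ξ u v (ε * (starRingEnd ℂ) lam) ∧
      (Dmat p N q κ ξ u v lam)ᴴ = Amat p N q κ ξ u v ((starRingEnd ℂ) lam)) ∧
    (∀ r : ℝ, (r : ℂ) ≠ 0 →
      (Tmat p N q κ ξ u v (r : ℂ))ᴴ = Tmat p N q κ ξ u v (r : ℂ)) :=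
  statement3_general p N hp q hq κ ξ u v hκ hξ hu hv hN ε hκR hξR hε

end SG
end

section
/- Let κ, ξ ∈ ℂ∖{0}, set μ_± := iκ^{±1}q^{1/2}ξ, and let L(λ) be the single-site Lax matrix (with 𝗎 := 𝗎₀, 𝗏 := 𝗏₀ on ℂ^p) and 𝗎^{1/2} := 𝗎^{(p+1)/2}. Then L(μ_+) factorizes as the rank-one product L(μ_+) = P_+·Q_+, where P_+ is the column vector κ·(𝗎^{1/2}(𝗏κ + 𝗏^{−1}κ^{−1}), 𝗎^{−1/2}(𝗏κ^{−1} + 𝗏^{−1}κ))ᵗ and Q_+ is the row vector (𝗎^{1/2}, 𝗎^{−1/2}); and L(μ_−) = P_−·Q_−, where P_− is the column vector κ·(𝗎^{1/2}, 𝗎^{−1/2})ᵗ and Q_− is the row vector ((𝗏κ + 𝗏^{−1}κ^{−1})𝗎^{1/2}, (𝗏κ^{−1} + 𝗏^{−1}κ)𝗎^{−1/2}). -/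
open Matrix Complex

namespace SG9

/-- The clock matrix `𝗏₀` on `ℂ^p`: `𝗏₀|k⟩ = q^k|k⟩`. -/
noncomputable def v0 (p : ℕ) (q : ℂ) : Matrix (ZMod p) (ZMod p) ℂ :=
  Matrix.diagonal fun k => q ^ k.val

/-- The inverse of the clock matrix. -/
noncomputable def v0Inv (p : ℕ) (q : ℂ) : Matrix (ZMod p) (ZMod p) ℂ :=
  Matrix.diagonal fun k => (q ^ k.val)⁻¹

/-- The shift matrix `𝗎₀` on `ℂ^p`: `𝗎₀|k⟩ = |k-1⟩`. -/
noncomputable def u0 (p : ℕ) : Matrix (ZMod p) (ZMod p) ℂ :=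
  Matrix.of fun j k => if j = k - 1 then 1 else 0

/-- The inverse of the shift matrix: `𝗎₀⁻¹|k⟩ = |k+1⟩`. -/
noncomputable def u0Inv (p : ℕ) : Matrix (ZMod p) (ZMod p) ℂ :=
  Matrix.of fun j k => if j = k + 1 then 1 else 0

/-- The square root `𝗎^{1/2} := 𝗎^{(p+1)/2}`. -/
noncomputable def uHalf (p : ℕ) [NeZero p] : Matrix (ZMod p) (ZMod p) ℂ :=
  u0 p ^ ((p + 1) / 2)

/-- The square root `𝗎^{-1/2} := (𝗎⁻¹)^{(p+1)/2}`. -/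
noncomputable def uInvHalf (p : ℕ) [NeZero p] : Matrix (ZMod p) (ZMod p) ℂ :=
  u0Inv p ^ ((p + 1) / 2)

/-- The single-site Lax matrix `L(λ)` (with `𝗎 = 𝗎₀`, `𝗏 = 𝗏₀` and `λ' = λ/ξ`). -/
noncomputable def SLax (p : ℕ) [NeZero p] (q κ ξ lam : ℂ) :
    Matrix (Fin 2) (Fin 2) (Matrix (ZMod p) (ZMod p) ℂ) :=
  !![κ • (u0 p * ((q ^ ((p + 1) / 2))⁻¹ • (κ • v0 p q) +
        (q ^ ((p + 1) / 2)) • (κ⁻¹ • v0Inv p q))),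
     (κ / Complex.I) • ((lam / ξ) • v0 p q - (lam / ξ)⁻¹ • v0Inv p q);
     (κ / Complex.I) • ((lam / ξ) • v0Inv p q - (lam / ξ)⁻¹ • v0 p q),
     κ • (u0Inv p * ((q ^ ((p + 1) / 2)) • (κ⁻¹ • v0 p q) +
        (q ^ ((p + 1) / 2))⁻¹ • (κ • v0Inv p q)))]

/-- The column vector `P_+`. -/
noncomputable def Pplus (p : ℕ) [NeZero p] (q κ : ℂ) :
    Matrix (Fin 2) (Fin 1) (Matrix (ZMod p) (ZMod p) ℂ) :=
  !![κ • (uHalf p * (κ • v0 p q + κ⁻¹ • v0Inv p q));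
     κ • (uInvHalf p * (κ⁻¹ • v0 p q + κ • v0Inv p q))]

/-- The row vector `Q_+ = (𝗎^{1/2}, 𝗎^{-1/2})`. -/
noncomputable def Qplus (p : ℕ) [NeZero p] :
    Matrix (Fin 1) (Fin 2) (Matrix (ZMod p) (ZMod p) ℂ) :=
  !![uHalf p, uInvHalf p]

/-- The column vector `P_- = κ·(𝗎^{1/2}, 𝗎^{-1/2})ᵗ`. -/
noncomputable def Pminus (p : ℕ) [NeZero p] (κ : ℂ) :
    Matrix (Fin 2) (Fin 1) (Matrix (ZMod p) (ZMod p) ℂ) :=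
  !![κ • uHalf p; κ • uInvHalf p]

/-- The row vector `Q_-`. -/
noncomputable def Qminus (p : ℕ) [NeZero p] (q κ : ℂ) :
    Matrix (Fin 1) (Fin 2) (Matrix (ZMod p) (ZMod p) ℂ) :=
  !![(κ • v0 p q + κ⁻¹ • v0Inv p q) * uHalf p, (κ⁻¹ • v0 p q + κ • v0Inv p q) * uInvHalf p]

noncomputable def sd (p : ℕ) (a : ZMod p) (d : ZMod p → ℂ) : Matrix (ZMod p) (ZMod p) ℂ :=
  Matrix.of fun j k => if j = k - a then d k else 0

lemma sd_congr {p : ℕ} {a b : ZMod p} {d e : ZMod p → ℂ} (h : a = b)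
    (h2 : ∀ k, d k = e k) : sd p a d = sd p b e := by
  subst h; unfold sd; congr 1; ext j k; rw [h2]

lemma sd_mul {p : ℕ} [NeZero p] (a b : ZMod p) (d e : ZMod p → ℂ) :
    sd p a d * sd p b e = sd p (a + b) (fun k => d (k - b) * e k) := by
  ext j l
  simp only [sd, Matrix.mul_apply, Matrix.of_apply]
  rw [Finset.sum_eq_single (l - b)]
  · have hiff : (j = l - b - a) ↔ (j = l - (a + b)) := by rw [sub_sub, add_comm]
    by_cases h : j = l - (a + b)
    · rw [if_pos (hiff.mpr h), if_pos rfl, if_pos h]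
    · rw [if_neg (fun hh => h (hiff.mp hh)), if_neg h, zero_mul]
  · intro k _ hk; rw [if_neg hk, mul_zero]
  · intro h; exact absurd (Finset.mem_univ _) h

lemma smul_sd {p : ℕ} (c : ℂ) (a : ZMod p) (d : ZMod p → ℂ) :
    c • sd p a d = sd p a (fun k => c * d k) := by
  ext j k; simp [sd, mul_ite]

lemma sd_add {p : ℕ} (a : ZMod p) (d e : ZMod p → ℂ) :
    sd p a d + sd p a e = sd p a (fun k => d k + e k) := by
  ext j k; simp only [sd, Matrix.add_apply, Matrix.of_apply]; split <;> simp

lemma sd_sub {p : ℕ} (a : ZMod p) (d e : ZMod p → ℂ) :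
    sd p a d - sd p a e = sd p a (fun k => d k - e k) := by
  ext j k; simp only [sd, Matrix.sub_apply, Matrix.of_apply]; split <;> simp

lemma neg_sd {p : ℕ} (a : ZMod p) (d : ZMod p → ℂ) :
    -sd p a d = sd p a (fun k => -d k) := by
  ext j k; simp only [sd, Matrix.neg_apply, Matrix.of_apply]; split <;> simp

lemma v0_eq (p : ℕ) [NeZero p] (q : ℂ) : v0 p q = sd p 0 (fun k => q ^ k.val) := by
  ext j k
  by_cases h : j = k <;> simp [v0, sd, Matrix.diagonal_apply, h, sub_zero]

lemma v0Inv_eq (p : ℕ) [NeZero p] (q : ℂ) : v0Inv p q = sd p 0 (fun k => (q ^ k.val)⁻¹) := by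
  ext j k
  by_cases h : j = k <;> simp [v0Inv, sd, Matrix.diagonal_apply, h, sub_zero]

lemma u0_pow (p : ℕ) [NeZero p] (n : ℕ) : u0 p ^ n = sd p (n : ZMod p) (fun _ => 1) := by
  induction n with
  | zero => ext j k; simp [sd, Matrix.one_apply, eq_comm]
  | succ n ih =>
    rw [pow_succ, ih]
    have : u0 p = sd p 1 (fun _ => 1) := rfl
    rw [this, sd_mul]
    exact sd_congr (by push_cast; ring) (fun k => one_mul 1)

lemma u0Inv_eq (p : ℕ) [NeZero p] : u0Inv p = sd p (-1) (fun _ => 1) := by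
  ext j k; simp [u0Inv, sd, sub_neg_eq_add]

lemma u0Inv_pow (p : ℕ) [NeZero p] (n : ℕ) :
    u0Inv p ^ n = sd p (-(n : ZMod p)) (fun _ => 1) := by
  induction n with
  | zero => ext j k; simp [sd, Matrix.one_apply, eq_comm]
  | succ n ih =>
    rw [pow_succ, ih, u0Inv_eq, sd_mul]
    exact sd_congr (by push_cast; ring) (fun k => one_mul 1)

set_option maxHeartbeats 1600000 in
/-- At the zeros `μ_± = iκ^{±1}q^{1/2}ξ` of the quantum determinant, the
single-site Lax matrix factorizes into rank-one products: `L(μ_+) = P_+·Q_+` and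
`L(μ_-) = P_-·Q_-`. -/
theorem statement9 (p : ℕ) [NeZero p] (hp : Odd p) (hp1 : 1 < p)
    (q : ℂ) (hq : IsPrimitiveRoot q p) (κ ξ : ℂ) (hκ : κ ≠ 0) (hξ : ξ ≠ 0) :
    SLax p q κ ξ (Complex.I * κ * q ^ ((p + 1) / 2) * ξ) = Pplus p q κ * Qplus p ∧
    SLax p q κ ξ (Complex.I * κ⁻¹ * q ^ ((p + 1) / 2) * ξ) = Pminus p κ * Qminus p q κ := by
  have hq0 : q ≠ 0 := hq.ne_zero (NeZero.ne p)
  have hqp : q ^ p = 1 := hq.pow_eq_one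
  have hs0 : q ^ ((p + 1) / 2) ≠ 0 := pow_ne_zero _ hq0
  have hpowmod : ∀ n : ℕ, q ^ (n % p) = q ^ n := by
    intro n
    conv_rhs => rw [← Nat.mod_add_div n p]
    rw [pow_add, pow_mul, hqp, one_pow, mul_one]
  have key : ∀ (x : ZMod p) (n : ℕ),
      q ^ ((x + (n : ZMod p)).val) = q ^ x.val * q ^ n := by
    intro x n
    rw [ZMod.val_add, hpowmod, pow_add, ZMod.val_natCast, hpowmod]
  have keyadd : ∀ x : ZMod p,
      q ^ ((x + (((p + 1) / 2 : ℕ) : ZMod p)).val) = q ^ x.val * q ^ ((p + 1) / 2) :=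
    fun x => key x _
  have keysub : ∀ x : ZMod p,
      q ^ ((x - (((p + 1) / 2 : ℕ) : ZMod p)).val) = q ^ x.val * (q ^ ((p + 1) / 2))⁻¹ := by
    intro x
    have h := key (x - (((p + 1) / 2 : ℕ) : ZMod p)) ((p + 1) / 2)
    rw [sub_add_cancel] at h
    rw [h, mul_assoc, mul_inv_cancel₀ hs0, mul_one]
  have hm2 : ((p + 1) / 2) * 2 = p + 1 := Nat.div_mul_cancel hp.add_one.two_dvd
  have hmm : ((((p + 1) / 2 : ℕ) : ZMod p)) + (((p + 1) / 2 : ℕ) : ZMod p) = 1 := by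
    have h : ((((p + 1) / 2) * 2 : ℕ) : ZMod p) = ((p + 1 : ℕ) : ZMod p) := by rw [hm2]
    push_cast [ZMod.natCast_self] at h
    linear_combination h
  have hc : (1 + p) / 2 = (p + 1) / 2 := by rw [Nat.add_comm]
  have keyadd' : ∀ x : ZMod p,
      q ^ ((x + (((1 + p) / 2 : ℕ) : ZMod p)).val) = q ^ x.val * q ^ ((1 + p) / 2) := by
    rw [hc]; exact keyadd
  have keysub' : ∀ x : ZMod p,
      q ^ ((x - (((1 + p) / 2 : ℕ) : ZMod p)).val) = q ^ x.val * (q ^ ((1 + p) / 2))⁻¹ := by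
    rw [hc]; exact keysub
  have hmm' : ((((1 + p) / 2 : ℕ) : ZMod p)) * 2 = 1 := by
    rw [hc]; linear_combination hmm
  have hu0eq : u0 p = sd p 1 (fun _ => 1) := rfl
  have hA : ∀ k : ZMod p, q ^ k.val ≠ 0 := fun k => pow_ne_zero _ hq0
  constructor <;>
  · refine Matrix.ext fun i j => ?_
    fin_cases i <;> fin_cases j <;>
      simp only [SLax, Pplus, Qplus, Pminus, Qminus, Matrix.mul_apply, Matrix.of_apply, Fin.sum_univ_one,
        Fin.isValue, Fin.zero_eta, Fin.mk_one, Matrix.cons_val', Matrix.cons_val_zero,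
        Matrix.cons_val_one, Matrix.head_cons, Matrix.empty_val', Matrix.cons_val_fin_one,
        Matrix.head_fin_const] <;>
      (simp only [uHalf, uInvHalf, u0_pow, u0Inv_pow]
       simp only [v0_eq, v0Inv_eq, hu0eq, u0Inv_eq, smul_sd, sd_add, sd_sub, sd_mul,
         neg_sd, sub_neg_eq_add, sub_zero]
       refine sd_congr ?_ fun k => ?_
       · first | ring1 | linear_combination hmm | linear_combination -hmm
       · simp only [keyadd, keysub]
         simp only [div_eq_mul_inv, mul_inv, Complex.inv_I]
         field_simp
         try ring_nf
         try simp only [Complex.I_sq]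
         try ring_nf
         try ring)

end SG9
end

section
/- Let v₀ ∈ ℂ∖{0}, V := v₀·𝗏₀ (a scaled clock matrix on ℂ^p), and κ ∈ ℂ∖{0} with κ⁴ ≠ 1 and v₀^{2p}κ^{2p} ≠ −1. Then for every k ∈ {1,…,p−1} each matrix q^{2a−1}V²κ² + 1 (a = 0,…,p−1) is invertible and V^{2k} = [(−1)^k (v₀^{2p}κ^{2p} + 1)/(p κ^{2k}(κ² − κ^{−2}))] · Σ_{a=0}^{p−1} q^{−k(2a−1)} (q^{2a−1}V² + κ²)(q^{2a−1}V²κ² + 1)^{−1}. -/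
open Matrix Complex

namespace SG11

/-- The scaled clock matrix `V = v₀·𝗏₀` on `ℂ^p`, `V|k⟩ = v₀q^k|k⟩`. -/
noncomputable def Vmat (p : ℕ) (q v₀ : ℂ) : Matrix (ZMod p) (ZMod p) ℂ :=
  Matrix.diagonal fun k => v₀ * q ^ k.val


lemma dvd_small {p : ℕ} {m : ℤ} (hd : (p:ℤ) ∣ m) (h1 : -(p:ℤ) < m) (h2 : m < p) : m = 0 := by
  rcases lt_trichotomy m 0 with h|h|h
  · have := Int.le_of_dvd (by omega) (dvd_neg.mpr hd); omega
  · exact h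
  · have := Int.le_of_dvd h hd; omega

lemma diagonal_sum' {n : Type*} [DecidableEq n] (s : Finset ℕ) (F : ℕ → n → ℂ) :
    (∑ a ∈ s, Matrix.diagonal (F a)) = Matrix.diagonal (fun j => ∑ a ∈ s, F a j) := by
  induction s using Finset.cons_induction with
  | empty => simp
  | cons a s ha ih =>
      rw [Finset.sum_cons, ih, Matrix.diagonal_add]
      exact congrArg Matrix.diagonal (funext fun j => by rw [Finset.sum_cons])

lemma Gsum (p : ℕ) (hp : Odd p) (hp0 : 0 < p) (q : ℂ) (hq : IsPrimitiveRoot q p) (m : ℤ) :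
    (∑ a ∈ Finset.range p, q ^ ((2*(a:ℤ)-1) * m)) = if (p:ℤ) ∣ m then (p:ℂ) else 0 := by
  have hq0 : q ≠ 0 := hq.ne_zero hp0.ne'
  have hqp : q ^ ((p:ℤ)) = 1 := by rw [_root_.zpow_natCast, hq.pow_eq_one]
  by_cases h : (p:ℤ) ∣ m
  · have hqm : q ^ m = 1 := (hq.zpow_eq_one_iff_dvd m).2 h
    simp only [h, if_true]
    rw [Finset.sum_congr rfl (fun (a : ℕ) _ => by
      rw [mul_comm, _root_.zpow_mul, hqm, _root_.one_zpow])]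
    simp
  · have hz1 : q ^ (2*m) ≠ 1 := by
      intro hz
      have h2 := (hq.zpow_eq_one_iff_dvd (2*m)).1 hz
      have hc : Nat.Coprime p 2 := Nat.coprime_two_right.mpr hp
      exact h (hc.isCoprime.dvd_of_dvd_mul_left h2)
    have hzp : (q ^ (2*m)) ^ p = 1 := by
      rw [← _root_.zpow_natCast (q ^ (2*m)) p, ← _root_.zpow_mul, mul_comm (2*m) (p:ℤ), _root_.zpow_mul, hqp, _root_.one_zpow]
    simp only [h, if_false]
    rw [Finset.sum_congr rfl (fun (a : ℕ) _ => show q ^ ((2*(a:ℤ)-1) * m) = q^(-m) * (q^(2*m))^a by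
      rw [← _root_.zpow_natCast (q^(2*m)) a, ← _root_.zpow_mul, ← _root_.zpow_add₀ hq0]; congr 1; ring)]
    rw [← Finset.mul_sum, geom_sum_eq hz1, hzp]
    simp

lemma key_scalar (p : ℕ) (hp : Odd p) (hp1 : 1 < p) (q : ℂ) (hq : IsPrimitiveRoot q p)
    (κ : ℂ) (hκ : κ ≠ 0) (hκ4 : κ ^ 4 ≠ 1) (x : ℂ) (hx : x ≠ 0)
    (hD : x ^ p * κ ^ (2*p) + 1 ≠ 0)
    (k : ℕ) (hk1 : 1 ≤ k) (hk2 : k ≤ p - 1) :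
    x ^ k = ((-1)^k * (x ^ p * κ^(2*p) + 1) / ((p:ℂ) * κ^(2*k) * (κ^2 - (κ^2)⁻¹))) *
      ∑ a ∈ Finset.range p, q ^ (-(k:ℤ)*(2*(a:ℤ)-1)) *
        ((q^(2*(a:ℤ)-1) * x + κ^2) * (q^(2*(a:ℤ)-1) * κ^2 * x + 1)⁻¹) := by
  have hp0 : 0 < p := by omega
  have hq0 : q ≠ 0 := hq.ne_zero hp0.ne'
  have hqp : q ^ ((p:ℤ)) = 1 := by rw [_root_.zpow_natCast, hq.pow_eq_one]
  have hpC : (p:ℂ) ≠ 0 := Nat.cast_ne_zero.2 hp0.ne'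
  have hκ2 : (κ:ℂ)^2 ≠ 0 := pow_ne_zero 2 hκ
  have hκd : κ^2 - (κ^2)⁻¹ ≠ 0 := by
    intro h
    apply hκ4
    have h2 : κ^2 = (κ^2)⁻¹ := by linear_combination h
    calc κ^4 = κ^2 * κ^2 := by ring
      _ = κ^2 * (κ^2)⁻¹ := by rw [← h2]
      _ = 1 := mul_inv_cancel₀ hκ2
  set D : ℂ := x ^ p * κ ^ (2*p) + 1 with hDdef
  have hyp : (κ^2*x) ^ p = x ^ p * κ ^ (2*p) := by rw [mul_pow, ← pow_mul]; ring
  have hepow : ∀ a : ℕ, (q ^ (2*(a:ℤ)-1)) ^ p = 1 := by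
    intro a
    rw [← _root_.zpow_natCast (q ^ (2*(a:ℤ)-1)) p, ← _root_.zpow_mul, mul_comm, _root_.zpow_mul, hqp, _root_.one_zpow]
  have hden : ∀ a : ℕ, q ^ (2*(a:ℤ)-1) * κ^2 * x + 1 ≠ 0 := by
    intro a h
    have h1 : q ^ (2*(a:ℤ)-1) * κ^2 * x = -1 := by linear_combination h
    apply hD
    have h2 : (q ^ (2*(a:ℤ)-1) * κ^2 * x) ^ p = (-1) ^ p := by rw [h1]
    rw [mul_pow, mul_pow, hepow a, one_mul, ← pow_mul, hp.neg_one_pow] at h2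
    rw [hDdef]; linear_combination h2
  have hinv : ∀ a : ℕ, (q ^ (2*(a:ℤ)-1) * κ^2 * x + 1)⁻¹ =
      (∑ n ∈ Finset.range p, (-(κ^2*x))^n * (q ^ (2*(a:ℤ)-1))^n) / D := by
    intro a
    have hS : (∑ n ∈ Finset.range p, (-(κ^2*x))^n * (q ^ (2*(a:ℤ)-1))^n)
        = ∑ n ∈ Finset.range p, (-(q ^ (2*(a:ℤ)-1) * (κ^2*x)))^n :=
      Finset.sum_congr rfl fun n _ => by
        rw [show -(q ^ (2*(a:ℤ)-1) * (κ^2*x)) = (-(κ^2*x)) * q ^ (2*(a:ℤ)-1) by ring, mul_pow]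
    have hgs := geom_sum_mul (-(q ^ (2*(a:ℤ)-1) * (κ^2*x))) p
    have ht : (-(q ^ (2*(a:ℤ)-1) * (κ^2*x))) ^ p = -((κ^2*x)^p) := by
      rw [neg_pow, hp.neg_one_pow, mul_pow, hepow a, one_mul]; ring
    have hmul : (q ^ (2*(a:ℤ)-1) * κ^2 * x + 1) *
        (∑ n ∈ Finset.range p, (-(κ^2*x))^n * (q ^ (2*(a:ℤ)-1))^n) = D := by
      rw [hS, hDdef]
      linear_combination -hgs - ht + hyp
    rw [inv_eq_of_mul_eq_one_right (a := q ^ (2*(a:ℤ)-1) * κ^2 * x + 1)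
      (b := (∑ n ∈ Finset.range p, (-(κ^2*x))^n * (q ^ (2*(a:ℤ)-1))^n) / D) ?_]
    rw [mul_div_assoc', hmul, div_self hD]
  have stepA : (∑ a ∈ Finset.range p, q ^ (-(k:ℤ)*(2*(a:ℤ)-1)) *
        ((q^(2*(a:ℤ)-1) * x + κ^2) * (q^(2*(a:ℤ)-1) * κ^2 * x + 1)⁻¹))
      = ∑ a ∈ Finset.range p, ∑ n ∈ Finset.range p, (1/D) * ((-(κ^2*x))^n *
          (x * q ^ ((2*(a:ℤ)-1)*((n:ℤ)+1-k)) + κ^2 * q ^ ((2*(a:ℤ)-1)*((n:ℤ)-k)))) := by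
    refine Finset.sum_congr rfl fun a _ => ?_
    rw [hinv a, Finset.sum_div, Finset.mul_sum, Finset.mul_sum]
    refine Finset.sum_congr rfl fun n _ => ?_
    have e0 : (q ^ (2*(a:ℤ)-1))^n = q ^ ((2*(a:ℤ)-1) * n) := by
      rw [← _root_.zpow_natCast (q ^ (2*(a:ℤ)-1)) n, ← _root_.zpow_mul]
    have e1 : q ^ ((2*(a:ℤ)-1)*((n:ℤ)+1-k)) = q ^ ((2*(a:ℤ)-1) * n) * q ^ (2*(a:ℤ)-1) * q ^ (-(k:ℤ)*(2*(a:ℤ)-1)) := by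
      rw [← _root_.zpow_add₀ hq0, ← _root_.zpow_add₀ hq0]; congr 1; ring
    have e2 : q ^ ((2*(a:ℤ)-1)*((n:ℤ)-k)) = q ^ ((2*(a:ℤ)-1) * n) * q ^ (-(k:ℤ)*(2*(a:ℤ)-1)) := by
      rw [← _root_.zpow_add₀ hq0]; congr 1; ring
    rw [e0, e1, e2]
    field_simp
  have inner : ∀ n ∈ Finset.range p, (∑ a ∈ Finset.range p, (1/D) * ((-(κ^2*x))^n *
          (x * q ^ ((2*(a:ℤ)-1)*((n:ℤ)+1-k)) + κ^2 * q ^ ((2*(a:ℤ)-1)*((n:ℤ)-k)))))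
      = (if n = k-1 then (1/D) * ((-(κ^2*x))^n * x * p) else 0)
        + (if n = k then (1/D) * ((-(κ^2*x))^n * κ^2 * p) else 0) := by
    intro n hn
    rw [Finset.mem_range] at hn
    have c1 : ((p:ℤ) ∣ ((n:ℤ)+1-k)) ↔ n = k-1 := by
      constructor
      · intro hd; have := dvd_small hd (by omega) (by omega); omega
      · intro h; subst h
        have h0 : ((k-1:ℕ):ℤ)+1-(k:ℤ) = 0 := by omega
        rw [h0]; exact dvd_zero _
    have c2 : ((p:ℤ) ∣ ((n:ℤ)-k)) ↔ n = k := by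
      constructor
      · intro hd; have := dvd_small hd (by omega) (by omega); omega
      · intro h; subst h; simp
    calc (∑ a ∈ Finset.range p, (1/D) * ((-(κ^2*x))^n *
          (x * q ^ ((2*(a:ℤ)-1)*((n:ℤ)+1-k)) + κ^2 * q ^ ((2*(a:ℤ)-1)*((n:ℤ)-k)))))
        = (1/D) * ((-(κ^2*x))^n *
          (x * (∑ a ∈ Finset.range p, q ^ ((2*(a:ℤ)-1)*((n:ℤ)+1-k)))
           + κ^2 * (∑ a ∈ Finset.range p, q ^ ((2*(a:ℤ)-1)*((n:ℤ)-k))))) := by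
          simp only [Finset.mul_sum, ← Finset.sum_add_distrib]
          try exact Finset.sum_congr rfl fun a _ => by ring
      _ = _ := by
          rw [Gsum p hp hp0 q hq ((n:ℤ)+1-k), Gsum p hp hp0 q hq ((n:ℤ)-k)]
          simp only [c1, c2]
          split_ifs with h1 h2 <;> first | omega | ring
  have stepC : (∑ n ∈ Finset.range p, ((if n = k-1 then (1/D) * ((-(κ^2*x))^n * x * p) else 0)
        + (if n = k then (1/D) * ((-(κ^2*x))^n * κ^2 * p) else 0)))
      = (1/D) * ((-(κ^2*x))^(k-1) * x * p) + (1/D) * ((-(κ^2*x))^k * κ^2 * p) := by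
    rw [Finset.sum_add_distrib, Finset.sum_ite_eq' (Finset.range p) (k-1),
      Finset.sum_ite_eq' (Finset.range p) k, if_pos (Finset.mem_range.2 (by omega)),
      if_pos (Finset.mem_range.2 (by omega))]
  rw [stepA, Finset.sum_comm, Finset.sum_congr rfl inner, stepC]
  obtain ⟨m, rfl⟩ : ∃ m, k = m + 1 := ⟨k-1, by omega⟩
  simp only [Nat.add_sub_cancel]
  have h1 : (-(κ^2*x))^m = (-1)^m * (κ^2*x)^m := neg_pow _ m
  have hκ41 : κ^4 - 1 ≠ 0 := sub_ne_zero.2 hκ4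
  have hden2 : ((p:ℂ)*κ^(2*(m+1))*(κ^2-(κ^2)⁻¹)) = (p:ℂ)*κ^(2*m)*(κ^4-1) := by
    field_simp
    ring
  have hcollapse : ∀ c u v : ℂ, (c * D / ((p:ℂ)*κ^(2*m)*(κ^4-1))) * ((1/D)*u + (1/D)*v)
      = c*(u+v) / ((p:ℂ)*κ^(2*m)*(κ^4-1)) := by
    intro c u v
    calc (c * D / ((p:ℂ)*κ^(2*m)*(κ^4-1))) * ((1/D)*u + (1/D)*v)
        = (c * D / ((p:ℂ)*κ^(2*m)*(κ^4-1))) * ((u+v)/D) := by ring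
      _ = (c * D * (u+v)) / (((p:ℂ)*κ^(2*m)*(κ^4-1)) * D) := div_mul_div_comm _ _ _ _
      _ = (c*(u+v)) * D / ((((p:ℂ)*κ^(2*m)*(κ^4-1))) * D) := by ring_nf
      _ = c*(u+v) / ((p:ℂ)*κ^(2*m)*(κ^4-1)) := mul_div_mul_right _ _ hD
  rw [hden2, hcollapse, pow_succ (-(κ^2*x)) m, h1, pow_succ (-1:ℂ) m]
  rcases Nat.even_or_odd m with he | ho
  · rw [he.neg_one_pow]
    field_simp
    ring
  · rw [ho.neg_one_pow]
    field_simp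
    ring


/-- For `κ⁴ ≠ 1` and `v₀^{2p}κ^{2p} ≠ -1` and every `k ∈ {1,…,p-1}`, each
matrix `q^{2a-1}V²κ² + 1` (`a = 0,…,p-1`) is invertible and
`V^{2k} = [(-1)^k(v₀^{2p}κ^{2p}+1)/(pκ^{2k}(κ²-κ^{-2}))]·Σ_{a=0}^{p-1} q^{-k(2a-1)}
(q^{2a-1}V² + κ²)(q^{2a-1}V²κ² + 1)^{-1}`. -/
theorem statement11 (p : ℕ) [NeZero p] (hp : Odd p) (hp1 : 1 < p)
    (q : ℂ) (hq : IsPrimitiveRoot q p) (v₀ κ : ℂ) (hv₀ : v₀ ≠ 0) (hκ : κ ≠ 0)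
    (hκ4 : κ ^ 4 ≠ 1) (hvκ : v₀ ^ (2 * p) * κ ^ (2 * p) ≠ -1) :
    ∀ k : ℕ, 1 ≤ k → k ≤ p - 1 →
      (∀ a < p, IsUnit ((q ^ (2 * (a : ℤ) - 1) * κ ^ 2) • Vmat p q v₀ ^ 2 +
        (1 : Matrix (ZMod p) (ZMod p) ℂ))) ∧
      Vmat p q v₀ ^ (2 * k) =
        ((-1) ^ k * (v₀ ^ (2 * p) * κ ^ (2 * p) + 1) /
            ((p : ℂ) * κ ^ (2 * k) * (κ ^ 2 - (κ ^ 2)⁻¹))) •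
          ∑ a ∈ Finset.range p, q ^ (-(k : ℤ) * (2 * (a : ℤ) - 1)) •
            ((q ^ (2 * (a : ℤ) - 1) • Vmat p q v₀ ^ 2 + (κ ^ 2) • 1) *
              ((q ^ (2 * (a : ℤ) - 1) * κ ^ 2) • Vmat p q v₀ ^ 2 + 1)⁻¹) := by
  intro k hk1 hk2
  have hp0 : 0 < p := by omega
  have hq0 : q ≠ 0 := hq.ne_zero hp0.ne'
  set d : ZMod p → ℂ := fun j => v₀ * q ^ j.val with hd
  have hV2 : Vmat p q v₀ ^ 2 = diagonal (fun j => d j ^ 2) := by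
    rw [Vmat, diagonal_pow]; rfl
  have hdj : ∀ j, d j ≠ 0 := fun j => mul_ne_zero hv₀ (pow_ne_zero _ hq0)
  have hxp : ∀ j : ZMod p, (d j ^ 2) ^ p = v₀ ^ (2*p) := by
    intro j
    have h1 : (d j ^ 2)^p = v₀^(2*p) * (q^p)^(2*j.val) := by rw [hd]; ring
    rw [h1, hq.pow_eq_one, one_pow, mul_one]
  have hden : ∀ (a : ℕ) (j : ZMod p), q ^ (2*(a:ℤ)-1) * κ^2 * d j ^ 2 + 1 ≠ 0 := by
    intro a j h
    have hqp : q ^ ((p:ℤ)) = 1 := by rw [_root_.zpow_natCast, hq.pow_eq_one]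
    have hepow : (q ^ (2*(a:ℤ)-1)) ^ p = 1 := by
      rw [← _root_.zpow_natCast (q ^ (2*(a:ℤ)-1)) p, ← _root_.zpow_mul, mul_comm,
        _root_.zpow_mul, hqp, _root_.one_zpow]
    have h1 : q ^ (2*(a:ℤ)-1) * κ^2 * d j ^ 2 = -1 := by linear_combination h
    apply hvκ
    have h2 : (q ^ (2*(a:ℤ)-1) * κ^2 * d j ^ 2) ^ p = (-1) ^ p := by rw [h1]
    rw [mul_pow, mul_pow, hepow, one_mul, ← pow_mul, hp.neg_one_pow, hxp j] at h2
    rw [← h2]; ring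
  have hmat : ∀ a : ℕ, ((q ^ (2*(a:ℤ)-1) * κ^2) • Vmat p q v₀ ^ 2 + 1)
      = diagonal (fun j => q ^ (2*(a:ℤ)-1) * κ^2 * d j ^ 2 + 1) := by
    intro a
    rw [hV2, ← Matrix.diagonal_smul, ← Matrix.diagonal_one, Matrix.diagonal_add]
    congr 1
  have hprod : ∀ a : ℕ, ((q ^ (2*(a:ℤ)-1) * κ^2) • Vmat p q v₀ ^ 2 + 1) *
      diagonal (fun j => (q ^ (2*(a:ℤ)-1) * κ^2 * d j ^ 2 + 1)⁻¹) = 1 := by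
    intro a
    rw [hmat a, diagonal_mul_diagonal, ← Matrix.diagonal_one]
    exact congrArg diagonal (funext fun j => mul_inv_cancel₀ (hden a j))
  have hinvmat : ∀ a : ℕ, (((q ^ (2*(a:ℤ)-1) * κ^2) • Vmat p q v₀ ^ 2 + 1) :
        Matrix (ZMod p) (ZMod p) ℂ)⁻¹
      = diagonal (fun j => (q ^ (2*(a:ℤ)-1) * κ^2 * d j ^ 2 + 1)⁻¹) := fun a =>
    inv_eq_right_inv (hprod a)
  have hprod' : ∀ a : ℕ, diagonal (fun j => (q ^ (2*(a:ℤ)-1) * κ^2 * d j ^ 2 + 1)⁻¹) *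
      ((q ^ (2*(a:ℤ)-1) * κ^2) • Vmat p q v₀ ^ 2 + 1) = 1 := by
    intro a
    rw [hmat a, diagonal_mul_diagonal, ← Matrix.diagonal_one]
    exact congrArg diagonal (funext fun j => inv_mul_cancel₀ (hden a j))
  refine ⟨fun a _ => ⟨⟨_, _, hprod a, hprod' a⟩, rfl⟩, ?_⟩
  have hterm : ∀ a : ℕ, q ^ (-(k:ℤ)*(2*(a:ℤ)-1)) •
      ((q ^ (2*(a:ℤ)-1) • Vmat p q v₀ ^ 2 + (κ^2) • 1) *
        ((q ^ (2*(a:ℤ)-1) * κ^2) • Vmat p q v₀ ^ 2 + 1)⁻¹)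
      = diagonal (fun j => q ^ (-(k:ℤ)*(2*(a:ℤ)-1)) *
          ((q^(2*(a:ℤ)-1) * d j ^ 2 + κ^2) * (q^(2*(a:ℤ)-1) * κ^2 * d j ^ 2 + 1)⁻¹)) := by
    intro a
    rw [hinvmat a, hV2]
    simp only [← Matrix.diagonal_one, ← Matrix.diagonal_smul, Matrix.diagonal_add,
      Matrix.diagonal_mul_diagonal]
    exact congrArg diagonal (funext fun j => by
      simp only [Pi.smul_apply, Pi.add_apply, Pi.mul_apply, Pi.one_apply, smul_eq_mul]
      ring_nf)
  have hLHS : Vmat p q v₀ ^ (2*k) = diagonal (fun j => (d j ^ 2) ^ k) := by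
    rw [Vmat, diagonal_pow]
    exact congrArg diagonal (funext fun j => by
      simp only [Pi.pow_apply]
      rw [← pow_mul])
  rw [hLHS, Finset.sum_congr rfl (fun a _ => hterm a), diagonal_sum',
    ← Matrix.diagonal_smul]
  refine congrArg diagonal (funext fun j => ?_)
  simp only [Pi.smul_apply, smul_eq_mul]
  rw [← hxp j]
  exact key_scalar p hp hp1 q hq κ hκ hκ4 (d j ^ 2) (pow_ne_zero 2 (hdj j))
    (by rw [hxp j]; intro hc; exact hvκ (by linear_combination hc)) k hk1 hk2

end SG11
end

section
/- Let κ ∈ ℂ∖{0} and x ∈ ℂ with x^pκ^{2p} ≠ −1. Then q^{2a−1}xκ² + 1 ≠ 0 for every a ∈ {0,…,p−1} and Σ_{a=0}^{p−1} (q^{2a−1}x + κ²)/(q^{2a−1}xκ² + 1) = p·(x^pκ^{2p−2} + κ²)/(x^pκ^{2p} + 1). -/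
open Finset

private lemma sum_zeta13 (p : ℕ) (hp : Odd p) (q : ℂ) (hq : IsPrimitiveRoot q p)
    (m : ℕ) (hmp : m ≤ p) :
    ∑ a ∈ range p, q ^ ((2*(a:ℤ)-1)*m) = if m = 0 ∨ m = p then (p:ℂ) else 0 := by
  have hp0 : 0 < p := hp.pos
  have hq0 : q ≠ 0 := hq.ne_zero hp0.ne'
  by_cases h0 : m = 0
  · simp [h0]
  by_cases hmp' : m = p
  · rw [if_pos (Or.inr hmp')]
    subst hmp'
    rw [Finset.sum_congr rfl (fun a _ => ?_), Finset.sum_const, card_range, nsmul_eq_mul, mul_one]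
    rw [mul_comm, zpow_mul, zpow_natCast, hq.pow_eq_one, one_zpow]
  · rw [if_neg (by simp [h0, hmp'])]
    have hterm : ∀ a ∈ range p, q ^ ((2*(a:ℤ)-1)*m) = q^(-(m:ℤ)) * (q^(2*m))^a := by
      intro a _
      rw [← zpow_natCast (q^(2*m)) a, ← zpow_natCast q (2*m), ← zpow_mul, ← zpow_add₀ hq0]
      congr 1
      push_cast
      ring
    have hr1 : q ^ (2*m) ≠ 1 := by
      intro h
      have hd := (hq.pow_eq_one_iff_dvd _).mp h
      have hpm : p ∣ m := (hp.coprime_two_right).dvd_of_dvd_mul_left hd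
      exact h0 (Nat.eq_zero_of_dvd_of_lt hpm (lt_of_le_of_ne hmp hmp'))
    have hgs : ∑ i ∈ range p, (q ^ (2*m)) ^ i = 0 := by
      rw [geom_sum_eq hr1]
      have : (q ^ (2*m)) ^ p = 1 := by
        rw [← pow_mul, mul_comm, pow_mul, hq.pow_eq_one, one_pow]
      rw [this, sub_self, zero_div]
    rw [Finset.sum_congr rfl hterm, ← Finset.mul_sum, hgs, mul_zero]

/-- For `p > 1` odd, `q` a primitive `p`-th root of unity, `κ ≠ 0` and
`x^pκ^{2p} ≠ -1`: all denominators `q^{2a-1}xκ² + 1` are nonzero and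
`Σ_{a=0}^{p-1} (q^{2a-1}x + κ²)/(q^{2a-1}xκ² + 1) = p(x^pκ^{2p-2} + κ²)/(x^pκ^{2p} + 1)`. -/
theorem statement13 (p : ℕ) (hp : Odd p) (hp1 : 1 < p)
    (q : ℂ) (hq : IsPrimitiveRoot q p) (κ x : ℂ) (hκ : κ ≠ 0)
    (hx : x ^ p * κ ^ (2 * p) ≠ -1) :
    (∀ a < p, q ^ (2 * (a : ℤ) - 1) * x * κ ^ 2 + 1 ≠ 0) ∧
    ∑ a ∈ Finset.range p,
        (q ^ (2 * (a : ℤ) - 1) * x + κ ^ 2) / (q ^ (2 * (a : ℤ) - 1) * x * κ ^ 2 + 1) =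
      (p : ℂ) * (x ^ p * κ ^ (2 * p - 2) + κ ^ 2) / (x ^ p * κ ^ (2 * p) + 1) := by
  have hp0 : 0 < p := hp.pos
  have hq0 : q ≠ 0 := hq.ne_zero hp0.ne'
  have hzp : ∀ a : ℕ, (q ^ (2*(a:ℤ)-1)) ^ p = 1 := fun a => by
    rw [← zpow_natCast (q ^ (2*(a:ℤ)-1)) p, ← zpow_mul, mul_comm, zpow_mul, zpow_natCast,
      hq.pow_eq_one, one_zpow]
  have hden : ∀ a : ℕ, q ^ (2 * (a : ℤ) - 1) * x * κ ^ 2 + 1 ≠ 0 := by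
    intro a h
    apply hx
    have h1 : q ^ (2*(a:ℤ)-1) * x * κ ^ 2 = -1 := by linear_combination h
    have h2 := congrArg (· ^ p) h1
    simp only [mul_pow, hzp a, one_mul, hp.neg_one_pow] at h2
    rw [← h2, ← pow_mul]
  have hD : x ^ p * κ ^ (2 * p) + 1 ≠ 0 := fun h => hx (by linear_combination h)
  refine ⟨fun a _ => hden a, ?_⟩
  have key : ∀ a ∈ range p,
      (q ^ (2*(a:ℤ)-1) * x + κ^2) / (q ^ (2*(a:ℤ)-1) * x * κ^2 + 1)
      = (∑ j ∈ range p, (-(x*κ^2))^j *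
          (x * q^((2*(a:ℤ)-1)*((j+1:ℕ):ℤ)) + κ^2 * q^((2*(a:ℤ)-1)*((j:ℕ):ℤ))))
        / (x ^ p * κ ^ (2 * p) + 1) := by
    intro a _
    have hzj : ∀ j : ℕ, (q ^ (2*(a:ℤ)-1)) ^ j = q ^ ((2*(a:ℤ)-1)*(j:ℤ)) := fun j => by
      rw [← zpow_natCast (q ^ (2*(a:ℤ)-1)) j, ← zpow_mul]
    have hgeo : (q ^ (2*(a:ℤ)-1) * x * κ^2 + 1) *
        (∑ j ∈ range p, (-(q ^ (2*(a:ℤ)-1) * x * κ^2))^j) = x ^ p * κ ^ (2*p) + 1 := by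
      have h := geom_sum_mul (-(q ^ (2*(a:ℤ)-1) * x * κ^2)) p
      have hpow : (-(q ^ (2*(a:ℤ)-1) * x * κ^2))^p = -(x^p * κ^(2*p)) := by
        rw [neg_pow, hp.neg_one_pow, mul_pow, mul_pow, hzp a, one_mul, ← pow_mul]
        ring
      rw [hpow] at h
      linear_combination -h
    rw [div_eq_div_iff (hden a) hD, ← hgeo, Finset.mul_sum, Finset.sum_mul, Finset.mul_sum]
    apply Finset.sum_congr rfl
    intro j _
    rw [← hzj (j+1), ← hzj j, pow_succ]
    ring
  rw [Finset.sum_congr rfl key, ← Finset.sum_div, Finset.sum_comm]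
  have inner : ∀ j ∈ range p,
      ∑ a ∈ range p, (-(x*κ^2))^j *
          (x * q^((2*(a:ℤ)-1)*((j+1:ℕ):ℤ)) + κ^2 * q^((2*(a:ℤ)-1)*((j:ℕ):ℤ)))
      = (-(x*κ^2))^j * (x * (if j+1 = 0 ∨ j+1 = p then (p:ℂ) else 0)
          + κ^2 * (if j = 0 ∨ j = p then (p:ℂ) else 0)) := by
    intro j hj
    rw [Finset.mem_range] at hj
    rw [← Finset.mul_sum, Finset.sum_add_distrib, ← Finset.mul_sum, ← Finset.mul_sum,
      sum_zeta13 p hp q hq (j+1) hj, sum_zeta13 p hp q hq j hj.le]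
  rw [Finset.sum_congr rfl inner]
  have hsum : ∑ j ∈ range p, (-(x*κ^2))^j * (x * (if j+1 = 0 ∨ j+1 = p then (p:ℂ) else 0)
          + κ^2 * (if j = 0 ∨ j = p then (p:ℂ) else 0))
      = (p:ℂ) * (x^p * κ^(2*p-2) + κ^2) := by
    have hsplit : ∀ j ∈ range p, (-(x*κ^2))^j * (x * (if j+1 = 0 ∨ j+1 = p then (p:ℂ) else 0)
          + κ^2 * (if j = 0 ∨ j = p then (p:ℂ) else 0))
        = (if j = p - 1 then (-(x*κ^2))^j * x * p else 0)
          + (if j = 0 then κ^2 * p else 0) := by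
      intro j hj
      rw [Finset.mem_range] at hj
      have h1 : (j+1 = 0 ∨ j+1 = p) ↔ j = p - 1 := by omega
      have h2 : (j = 0 ∨ j = p) ↔ j = 0 := by omega
      simp only [h1, h2]
      have e3 : p - 1 ≠ 0 := by omega
      by_cases e1 : j = p - 1 <;> by_cases e2 : j = 0
      · exfalso; omega
      · simp [e1, e2, e3]; try ring
      · simp [e1, e2, e3]; try ring
      · simp [e1, e2]
    rw [Finset.sum_congr rfl hsplit, Finset.sum_add_distrib,
      Finset.sum_ite_eq' (range p) (p-1), Finset.sum_ite_eq' (range p) 0]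
    have hm1 : p - 1 ∈ range p := by simp; omega
    have hm0 : (0:ℕ) ∈ range p := by simp [hp0]
    rw [if_pos hm1, if_pos hm0]
    have heven : Even (p - 1) := Nat.Odd.sub_odd hp odd_one
    rw [heven.neg_pow, mul_pow, ← pow_mul]
    have h2p : 2 * (p - 1) = 2*p - 2 := by omega
    have hxp : x ^ (p-1) * x = x ^ p := by rw [← pow_succ]; congr 1; omega
    rw [h2p]
    linear_combination ((p:ℂ) * κ^(2*p-2)) * hxp
  rw [hsum, mul_div_assoc]
end

section
/- Let n ≥ 1 be an integer, q ∈ ℂ with q ≠ 0 and q² ≠ 1, η_1,…,η_n ∈ ℂ∖{0}, and α_1,…,α_n nonnegative integers such that the numbers q^{−2α_a}η_a² (a = 1,…,n) are pairwise distinct. Then, with [m] := (q^m − q^{−m})/(q − q^{−1}), one has Σ_{a=1}^{n} [α_a] · ∏_{i≠a} (q^{α_a}η_i/η_a − η_a/(q^{α_a}η_i)) / (q^{α_a−α_i}η_i/η_a − η_a/(q^{α_a−α_i}η_i)) = [Σ_{a=1}^{n} α_a], all the denominators being nonzero. -/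
/-!
Put `x_a = q^{α_a}` and `t_a = (η_a / x_a)² = q^{-2α_a} η_a²`. Each factor of the product equals
`x_i⁻¹ (t_a - η_i²) / (t_a - t_i)`, so `(q - q⁻¹)` times the `a`-th summand is
`-X⁻¹ ∏_i (t_a - η_i²) / (t_a ∏_{j ≠ a} (t_a - t_j))` with `X = ∏ x_i = q^{Σ α}`. Summed over `a`,
this is Lagrange's formula for the leading coefficient of the monic polynomial `∏_i (T - η_i²)`
from its values at the `n + 1` nodes `0, t_1, …, t_n`, minus the contribution of the node `0`;
hence the sum is `-X⁻¹ (1 - ∏ η_i² / t_i) = -X⁻¹ (1 - X²) = X - X⁻¹`.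
-/

namespace SG14

open Finset

noncomputable def qnum (q : ℂ) (m : ℕ) : ℂ :=
  (q ^ (m : ℤ) - q ^ (-(m : ℤ))) / (q - q⁻¹)

variable {K M ι : Type*} [Field K] [CommMonoid M] [Fintype ι] [DecidableEq ι]

theorem prod_univ_erase_none (f : Option ι → M) :
    ∏ o ∈ univ.erase none, f o = ∏ i, f (some i) := by
  simp [univ_option, insertNone]

theorem prod_univ_erase_some (f : Option ι → M) (a : ι) :
    ∏ o ∈ univ.erase (some a), f o = f none * ∏ i ∈ univ.erase a, f (some i) := by
  rw [univ_option, insertNone, OrderEmbedding.coe_ofMapLEIff, cons_eq_insert,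
    erase_insert_of_ne (Option.some_ne_none a).symm, prod_insert (by simp),
    show some a = Function.Embedding.some a from rfl, ← map_erase, prod_map]
  rfl

theorem sum_prod_sub_div_eq_one_sub_prod (t z : ι → K) (ht₀ : ∀ a, t a ≠ 0)
    (ht : Function.Injective t) :
    ∑ a, (∏ i, (t a - z i)) / (t a * ∏ j ∈ univ.erase a, (t a - t j)) = 1 - ∏ i, z i / t i := by
  set v : Option ι → K := fun o => o.elim 0 t
  have hv : Set.InjOn v (univ : Finset (Option ι)) := by
    rintro (_ | a) - (_ | b) - h
    exacts [rfl, absurd h.symm (ht₀ b), absurd h (ht₀ a), congrArg some (ht h)]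
  have h := Lagrange.leadingCoeff_eq_sum hv (P := Lagrange.nodal univ z)
    (by simp [Lagrange.degree_nodal])
  rw [(Lagrange.nodal_monic).leadingCoeff, Fintype.sum_option, prod_univ_erase_none] at h
  simp only [Lagrange.eval_nodal, prod_univ_erase_some, v, Option.elim, sub_zero, zero_sub] at h
  rw [h, prod_div_distrib, prod_neg, prod_neg,
    mul_div_mul_left _ _ (pow_ne_zero _ (neg_ne_zero.mpr one_ne_zero))]
  ring

theorem mul_div_sub_div_mul_ne_zero {x y e f : K} (hx : x ≠ 0) (hy : y ≠ 0) (he : e ≠ 0)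
    (hf : f ≠ 0) (hne : (e / x) ^ 2 ≠ (f / y) ^ 2) :
    x / y * f / e - e / (x / y * f) ≠ 0 := by
  contrapose! hne
  field_simp at hne ⊢
  linear_combination -hne

theorem mul_div_sub_div_mul_div_eq {x y e f : K} (hx : x ≠ 0) (hy : y ≠ 0) (he : e ≠ 0)
    (hf : f ≠ 0) (hne : (e / x) ^ 2 ≠ (f / y) ^ 2) :
    (x * f / e - e / (x * f)) / (x / y * f / e - e / (x / y * f)) =
      y⁻¹ * ((e / x) ^ 2 - f ^ 2) / ((e / x) ^ 2 - (f / y) ^ 2) := by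
  rw [div_eq_div_iff (mul_div_sub_div_mul_ne_zero hx hy he hf hne) (sub_ne_zero.mpr hne)]
  field_simp
  ring

theorem sum_sub_inv_mul_prod_div_eq (x η : ι → K) (hx : ∀ a, x a ≠ 0)
    (hη : ∀ a, η a ≠ 0) (ht : Function.Injective fun a => (η a / x a) ^ 2) :
    ∑ a, (x a - (x a)⁻¹) * ∏ i ∈ univ.erase a,
        (x a * η i / η a - η a / (x a * η i)) / (x a / x i * η i / η a - η a / (x a / x i * η i)) =
      ∏ a, x a - (∏ a, x a)⁻¹ := by
  set t : ι → K := fun a => (η a / x a) ^ 2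
  set X := ∏ a, x a
  have ht₀ : ∀ a, t a ≠ 0 := fun a => pow_ne_zero _ (div_ne_zero (hη a) (hx a))
  have hX : X ≠ 0 := prod_ne_zero_iff.mpr fun a _ => hx a
  have hterm : ∀ a, (x a - (x a)⁻¹) * ∏ i ∈ univ.erase a,
      (x a * η i / η a - η a / (x a * η i)) / (x a / x i * η i / η a - η a / (x a / x i * η i)) =
        -X⁻¹ * ((∏ i, (t a - η i ^ 2)) / (t a * ∏ j ∈ univ.erase a, (t a - t j))) := by
    intro a
    have hratio : ∀ i ∈ univ.erase a,
        (x a * η i / η a - η a / (x a * η i)) / (x a / x i * η i / η a - η a / (x a / x i * η i)) =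
          (x i)⁻¹ * (t a - η i ^ 2) / (t a - t i) := fun i hi =>
      mul_div_sub_div_mul_div_eq (hx a) (hx i) (hη a) (hη i) (ht.ne (ne_of_mem_erase hi).symm)
    rw [prod_congr rfl hratio, prod_div_distrib, prod_mul_distrib, prod_inv_distrib,
      ← mul_prod_erase univ (fun i => t a - η i ^ 2) (mem_univ a),
      show X = x a * ∏ i ∈ univ.erase a, x i from (mul_prod_erase univ x (mem_univ a)).symm]
    have := hx a
    have := hη a
    simp only [t]
    field_simp
    ring
  have hprod : ∏ i, η i ^ 2 / t i = X ^ 2 := by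
    rw [← prod_pow]
    refine prod_congr rfl fun i _ => ?_
    have := hx i
    have := hη i
    simp only [t]
    field_simp
  rw [sum_congr rfl fun a _ => hterm a, ← mul_sum, sum_prod_sub_div_eq_one_sub_prod t _ ht₀ ht,
    hprod]
  field_simp
  ring

theorem statement14_general (n : ℕ) (q : ℂ) (hq0 : q ≠ 0)
    (η : Fin n → ℂ) (hη : ∀ a, η a ≠ 0) (α : Fin n → ℕ)
    (hdist : Function.Injective fun a => q ^ (-2 * (α a : ℤ)) * η a ^ 2) :
    (∀ a i : Fin n, i ≠ a →
      q ^ ((α a : ℤ) - (α i : ℤ)) * η i / η a -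
        η a / (q ^ ((α a : ℤ) - (α i : ℤ)) * η i) ≠ 0) ∧
    ∑ a : Fin n, qnum q (α a) *
        ∏ i ∈ Finset.univ.erase a,
          (q ^ (α a) * η i / η a - η a / (q ^ (α a) * η i)) /
            (q ^ ((α a : ℤ) - (α i : ℤ)) * η i / η a -
              η a / (q ^ ((α a : ℤ) - (α i : ℤ)) * η i)) =
      qnum q (∑ a, α a) := by
  have hx : ∀ a, q ^ α a ≠ 0 := fun a => pow_ne_zero _ hq0
  have hzpow : ∀ a i, q ^ ((α a : ℤ) - (α i : ℤ)) = q ^ α a / q ^ α i := fun a i => by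
    rw [zpow_sub₀ hq0, zpow_natCast, zpow_natCast]
  have hqnum : ∀ m : ℕ, qnum q m = (q ^ m - (q ^ m)⁻¹) / (q - q⁻¹) := fun m => by
    rw [qnum, zpow_neg, zpow_natCast]
  have ht : Function.Injective fun a => (η a / q ^ α a) ^ 2 := by
    convert hdist using 2 with a
    rw [mul_comm (-2 : ℤ), zpow_mul, zpow_neg, zpow_natCast, div_pow, div_eq_inv_mul]
    norm_cast
  refine ⟨fun a i hia => ?_, ?_⟩
  · rw [hzpow]
    exact mul_div_sub_div_mul_ne_zero (hx a) (hx i) (hη a) (hη i) (ht.ne hia.symm)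
  · simp only [hzpow, hqnum, ← prod_pow_eq_pow_sum]
    rw [← sum_sub_inv_mul_prod_div_eq _ η hx hη ht, sum_div]
    exact sum_congr rfl fun a _ => div_mul_eq_mul_div _ _ _

/-- For `q ≠ 0`, `q² ≠ 1`, nonzero `η_a` and nonnegative integers `α_a` with
the `q^{-2α_a}η_a²` pairwise distinct,
`Σ_a [α_a]·∏_{i≠a} (q^{α_a}η_i/η_a - η_a/(q^{α_a}η_i))/(q^{α_a-α_i}η_i/η_a - η_a/(q^{α_a-α_i}η_i))
 = [Σ_a α_a]`, all denominators being nonzero. -/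
theorem statement14 (n : ℕ) (hn : 1 ≤ n) (q : ℂ) (hq0 : q ≠ 0) (hq1 : q ^ 2 ≠ 1)
    (η : Fin n → ℂ) (hη : ∀ a, η a ≠ 0) (α : Fin n → ℕ)
    (hdist : Function.Injective fun a => q ^ (-2 * (α a : ℤ)) * η a ^ 2) :
    (∀ a i : Fin n, i ≠ a →
      q ^ ((α a : ℤ) - (α i : ℤ)) * η i / η a -
        η a / (q ^ ((α a : ℤ) - (α i : ℤ)) * η i) ≠ 0) ∧
    ∑ a : Fin n, qnum q (α a) *
        ∏ i ∈ Finset.univ.erase a,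
          (q ^ (α a) * η i / η a - η a / (q ^ (α a) * η i)) /
            (q ^ ((α a : ℤ) - (α i : ℤ)) * η i / η a -
              η a / (q ^ ((α a : ℤ) - (α i : ℤ)) * η i)) =
      qnum q (∑ a, α a) :=
  statement14_general n q hq0 η hη α hdist

end SG14
end

section
/- Let p ≥ 1 be an integer, q ∈ ℂ with q^p = 1, η ∈ ℂ∖{0}, and write η^{(h)} := q^h η for h ∈ ℤ. Let a, d, t, t', Q, Q̄ : ℂ∖{0} → ℂ be functions such that for every h ∈ ℤ: t'(η^{(h)})Q(η^{(h)}) = a(η^{(h)})Q(η^{(h−1)}) + d(η^{(h)})Q(η^{(h+1)}) and t(η^{(h)})Q̄(η^{(h)}) = d(η^{(h−1)})Q̄(η^{(h−1)}) + a(η^{(h+1)})Q̄(η^{(h+1)}). Then Σ_{h=1}^{p} Q(η^{(h)}) Q̄(η^{(h)}) (t'(η^{(h)}) − t(η^{(h)})) = 0. -/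
/-- Let `q^p = 1` and `η ≠ 0`, and suppose `Q` and `Q̄` satisfy the right and
left Baxter equations along the orbit `η^{(h)} = q^h η`:
`t'(η^{(h)})Q(η^{(h)}) = a(η^{(h)})Q(η^{(h-1)}) + d(η^{(h)})Q(η^{(h+1)})` and
`t(η^{(h)})Q̄(η^{(h)}) = d(η^{(h-1)})Q̄(η^{(h-1)}) + a(η^{(h+1)})Q̄(η^{(h+1)})`. Then
`Σ_{h=1}^p Q(η^{(h)})Q̄(η^{(h)})(t'(η^{(h)}) - t(η^{(h)})) = 0`. -/
theorem statement16 (p : ℕ) (hp : 1 ≤ p) (q : ℂ) (hqp : q ^ p = 1)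
    (η : ℂ) (hη : η ≠ 0) (a d t t' Q Qb : ℂ → ℂ)
    (hR : ∀ h : ℤ, t' (q ^ h * η) * Q (q ^ h * η) =
      a (q ^ h * η) * Q (q ^ (h - 1) * η) + d (q ^ h * η) * Q (q ^ (h + 1) * η))
    (hL : ∀ h : ℤ, t (q ^ h * η) * Qb (q ^ h * η) =
      d (q ^ (h - 1) * η) * Qb (q ^ (h - 1) * η) +
        a (q ^ (h + 1) * η) * Qb (q ^ (h + 1) * η)) :
    ∑ h ∈ Finset.Icc 1 p,
        Q (q ^ (h : ℤ) * η) * Qb (q ^ (h : ℤ) * η) *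
          (t' (q ^ (h : ℤ) * η) - t (q ^ (h : ℤ) * η)) = 0 := by
  have hq0 : q ≠ 0 := by
    intro h0
    rw [h0, zero_pow (by omega : p ≠ 0)] at hqp
    exact zero_ne_one hqp
  have hzp : q ^ (p : ℤ) = 1 := by rw [zpow_natCast]; exact hqp
  set f : ℤ → ℂ := fun h =>
    Q (q ^ h * η) * Qb (q ^ h * η) * (t' (q ^ h * η) - t (q ^ h * η)) with hf
  set g : ℤ → ℂ := fun h =>
    a (q ^ h * η) * Q (q ^ (h - 1) * η) * Qb (q ^ h * η) -
      d (q ^ (h - 1) * η) * Q (q ^ h * η) * Qb (q ^ (h - 1) * η) with hg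
  have key : ∀ h : ℤ, f h = g h - g (h + 1) := by
    intro h
    simp only [hf, hg]
    have e1 : (h + 1 - 1 : ℤ) = h := by ring
    rw [e1]
    linear_combination Qb (q ^ h * η) * hR h - Q (q ^ h * η) * hL h
  have hsum : ∑ h ∈ Finset.Icc 1 p, f (h : ℤ) = g 1 - g ((p : ℤ) + 1) := by
    rw [← Finset.Ico_add_one_right_eq_Icc, Finset.sum_Ico_eq_sum_range]
    have : ∀ i ∈ Finset.range (p + 1 - 1), f ((1 + i : ℕ) : ℤ) =
        (fun i : ℕ => g ((i : ℤ) + 1)) i - (fun i : ℕ => g ((i : ℤ) + 1)) (i + 1) := by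
      intro i _
      have e : ((1 + i : ℕ) : ℤ) = (i : ℤ) + 1 := by push_cast; ring
      rw [e]
      exact key _
    rw [Finset.sum_congr rfl this, Finset.sum_range_sub' (fun i : ℕ => g ((i : ℤ) + 1))]
    norm_num
  have hper : g ((p : ℤ) + 1) = g 1 := by
    simp only [hg]
    have e2 : q ^ ((p : ℤ) + 1) = q ^ (1 : ℤ) := by
      rw [zpow_add₀ hq0, hzp, one_mul]
    have e3 : ((p : ℤ) + 1 - 1) = (p : ℤ) := by ring
    have e4 : q ^ ((p : ℤ)) = q ^ ((1 : ℤ) - 1) := by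
      norm_num [hzp]
    rw [e2, e3, e4]
  calc ∑ h ∈ Finset.Icc 1 p,
        Q (q ^ (h : ℤ) * η) * Qb (q ^ (h : ℤ) * η) *
          (t' (q ^ (h : ℤ) * η) - t (q ^ (h : ℤ) * η))
      = ∑ h ∈ Finset.Icc 1 p, f (h : ℤ) := by simp [hf]
    _ = g 1 - g ((p : ℤ) + 1) := hsum
    _ = 0 := by rw [hper, sub_self]
end

section
/- Let p ≥ 1 and n ≥ 1 be integers, q ∈ ℂ∖{0} with q^p = 1, η_1,…,η_n ∈ ℂ∖{0}, and write η_a^{(h)} := q^h η_a. Let a, d, Q, Q̄ : ℂ∖{0} → ℂ and t, t' : ℂ∖{0} → ℂ be functions such that t'(λ) − t(λ) = Σ_{b=1}^{n} v_b λ^{2b−n−1} for all λ ≠ 0, for some vector (v_1,…,v_n) ≠ 0, and such that for every a' ∈ {1,…,n} and h ∈ ℤ: t'(η_{a'}^{(h)})Q(η_{a'}^{(h)}) = a(η_{a'}^{(h)})Q(η_{a'}^{(h−1)}) + d(η_{a'}^{(h)})Q(η_{a'}^{(h+1)}) and t(η_{a'}^{(h)})Q̄(η_{a'}^{(h)}) =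 d(η_{a'}^{(h−1)})Q̄(η_{a'}^{(h−1)}) + a(η_{a'}^{(h+1)})Q̄(η_{a'}^{(h+1)}). Then the n×n matrix Φ with entries Φ_{a,b} := Σ_{c=1}^{p} Q(η_a^{(c)}) Q̄(η_a^{(c)}) (η_a^{(c)})^{2b−n−1} has determinant zero (orthogonality of transfer-matrix eigenstates corresponding to different eigenvalues). -/
/-- (Orthogonality of transfer-matrix eigenstates.) Let `q^p = 1`,
`η_a ≠ 0`, and suppose `t' - t` is the Laurent polynomial `Σ_b v_b λ^{2b-n-1}` with
`(v_1,…,v_n) ≠ 0`, while `Q` and `Q̄` satisfy the right and left Baxter equations along each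
orbit `η_a^{(h)} = q^h η_a`. Then the `n×n` matrix
`Φ_{a,b} = Σ_{c=1}^p Q(η_a^{(c)})Q̄(η_a^{(c)})(η_a^{(c)})^{2b-n-1}` has determinant zero. -/
theorem statement17 (p n : ℕ) (hp : 1 ≤ p) (hn : 1 ≤ n) (q : ℂ) (hq0 : q ≠ 0)
    (hqp : q ^ p = 1) (η : Fin n → ℂ) (hη : ∀ a, η a ≠ 0)
    (a d Q Qb t t' : ℂ → ℂ) (v : Fin n → ℂ) (hv : v ≠ 0)
    (hdiff : ∀ lam : ℂ, lam ≠ 0 →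
      t' lam - t lam = ∑ b : Fin n, v b * lam ^ (2 * (b : ℤ) + 1 - n))
    (hR : ∀ a' : Fin n, ∀ h : ℤ,
      t' (q ^ h * η a') * Q (q ^ h * η a') =
        a (q ^ h * η a') * Q (q ^ (h - 1) * η a') +
          d (q ^ h * η a') * Q (q ^ (h + 1) * η a'))
    (hL : ∀ a' : Fin n, ∀ h : ℤ,
      t (q ^ h * η a') * Qb (q ^ h * η a') =
        d (q ^ (h - 1) * η a') * Qb (q ^ (h - 1) * η a') +
          a (q ^ (h + 1) * η a') * Qb (q ^ (h + 1) * η a')) :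
    Matrix.det (Matrix.of fun a' b : Fin n =>
      ∑ c ∈ Finset.Icc 1 p,
        Q (q ^ (c : ℤ) * η a') * Qb (q ^ (c : ℤ) * η a') *
          (q ^ (c : ℤ) * η a') ^ (2 * (b : ℤ) + 1 - n)) = 0 := by
  rw [← Matrix.exists_mulVec_eq_zero_iff]
  refine ⟨v, hv, ?_⟩
  funext a'
  simp only [Matrix.mulVec, dotProduct, Matrix.of_apply, Pi.zero_apply]
  have hper : ∀ h : ℤ, q ^ (h + (p : ℤ)) = q ^ h := by
    intro h
    rw [zpow_add₀ hq0, zpow_natCast, hqp, mul_one]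
  set P : ℤ → ℂ := fun h => q ^ h * η a' with hP
  have hPper : ∀ h : ℤ, P (h + (p : ℤ)) = P h := by
    intro h; simp only [hP, hper]
  have hPne : ∀ h : ℤ, P h ≠ 0 := fun h => mul_ne_zero (zpow_ne_zero _ hq0) (hη a')
  set A : ℤ → ℂ := fun h => a (P h) * Q (P (h - 1)) * Qb (P h) with hA
  set D : ℤ → ℂ := fun h => d (P h) * Q (P (h + 1)) * Qb (P h) with hD
  have expand : ∀ h : ℤ, Q (P h) * Qb (P h) * (t' (P h) - t (P h)) =
      (A h - A (h + 1)) + (D h - D (h - 1)) := by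
    intro h
    have h1 := hR a' h
    have h2 := hL a' h
    have e1 : Q (P h) * Qb (P h) * (t' (P h) - t (P h)) =
        Qb (P h) * (t' (P h) * Q (P h)) - Q (P h) * (t (P h) * Qb (P h)) := by ring
    rw [e1, h1, h2]
    simp only [hA, hD, hP]
    have e2 : h + 1 - 1 = h := by ring
    have e3 : h - 1 + 1 = h := by ring
    rw [e2, e3]
    ring
  -- swap sums and use hdiff
  have step1 : ∑ b : Fin n, (∑ c ∈ Finset.Icc 1 p,
        Q (q ^ (c : ℤ) * η a') * Qb (q ^ (c : ℤ) * η a') *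
          (q ^ (c : ℤ) * η a') ^ (2 * (b : ℤ) + 1 - n)) * v b =
      ∑ c ∈ Finset.Icc 1 p, Q (P (c : ℤ)) * Qb (P (c : ℤ)) * (t' (P (c : ℤ)) - t (P (c : ℤ))) := by
    simp only [Finset.sum_mul]
    rw [Finset.sum_comm]
    refine Finset.sum_congr rfl fun c _ => ?_
    rw [hdiff _ (hPne (c : ℤ))]
    simp only [hP, Finset.mul_sum]
    refine Finset.sum_congr rfl fun b _ => ?_
    ring
  rw [step1]
  have step2 : ∑ c ∈ Finset.Icc 1 p, Q (P (c : ℤ)) * Qb (P (c : ℤ)) *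
      (t' (P (c : ℤ)) - t (P (c : ℤ))) =
      ∑ c ∈ Finset.Icc 1 p, ((A (c : ℤ) - A ((c : ℤ) + 1)) + (D (c : ℤ) - D ((c : ℤ) - 1))) :=
    Finset.sum_congr rfl fun c _ => expand (c : ℤ)
  rw [step2, Finset.sum_add_distrib]
  have sumA : ∑ c ∈ Finset.Icc 1 p, (A (c : ℤ) - A ((c : ℤ) + 1)) = 0 := by
    have : Finset.Icc 1 p = Finset.Ico 1 (p + 1) := by
      rw [Finset.Ico_add_one_right_eq_Icc]
    rw [this, Finset.sum_Ico_eq_sum_range]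
    simp only [Nat.add_sub_cancel]
    have := Finset.sum_range_sub' (f := fun i : ℕ => A (1 + (i : ℤ))) p
    have cast1 : ∀ i : ℕ, A ((1 + i : ℕ) : ℤ) = A (1 + (i : ℤ)) := by
      intro i; push_cast; ring_nf
    have cast2 : ∀ i : ℕ, A (((1 + i : ℕ) : ℤ) + 1) = A (1 + ((i + 1 : ℕ) : ℤ)) := by
      intro i; push_cast; ring_nf
    calc ∑ i ∈ Finset.range p, (A ((1 + i : ℕ) : ℤ) - A (((1 + i : ℕ) : ℤ) + 1))
        = ∑ i ∈ Finset.range p, ((fun j : ℕ => A (1 + (j : ℤ))) i -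
            (fun j : ℕ => A (1 + (j : ℤ))) (i + 1)) := by
          refine Finset.sum_congr rfl fun i _ => ?_
          rw [cast1, cast2]
      _ = A (1 + ((0 : ℕ) : ℤ)) - A (1 + ((p : ℕ) : ℤ)) := Finset.sum_range_sub' _ p
      _ = 0 := by
          rw [sub_eq_zero]
          simp only [hA]
          rw [show (1 + ((p : ℕ) : ℤ) - 1) = 0 + (p : ℤ) from by push_cast; ring,
            hPper 0, hPper 1]
          norm_num
  have sumD : ∑ c ∈ Finset.Icc 1 p, (D (c : ℤ) - D ((c : ℤ) - 1)) = 0 := by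
    have : Finset.Icc 1 p = Finset.Ico 1 (p + 1) := by
      rw [Finset.Ico_add_one_right_eq_Icc]
    rw [this, Finset.sum_Ico_eq_sum_range]
    simp only [Nat.add_sub_cancel]
    calc ∑ i ∈ Finset.range p, (D ((1 + i : ℕ) : ℤ) - D (((1 + i : ℕ) : ℤ) - 1))
        = ∑ i ∈ Finset.range p, ((fun j : ℕ => D (j : ℤ)) (i + 1) -
            (fun j : ℕ => D (j : ℤ)) i) := by
          refine Finset.sum_congr rfl fun i _ => ?_
          have c2 : ((1 + i : ℕ) : ℤ) - 1 = ((i : ℕ) : ℤ) := by push_cast; ring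
          have c1 : ((1 + i : ℕ) : ℤ) = ((i + 1 : ℕ) : ℤ) := by push_cast; ring
          rw [c2, c1]
      _ = D ((p : ℕ) : ℤ) - D ((0 : ℕ) : ℤ) := Finset.sum_range_sub (fun j : ℕ => D (j : ℤ)) p
      _ = 0 := by
          rw [sub_eq_zero]
          simp only [hD]
          rw [show (((p : ℕ) : ℤ)) = 0 + (p : ℤ) from by push_cast; ring,
            show ((0 : ℤ) + (p : ℤ) + 1) = 1 + (p : ℤ) from by ring,
            hPper 0, hPper 1]
          norm_num
  rw [sumA, sumD, add_zero]
end
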